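/- arXiv:1706.05423 — 5 statements merged into one kernel-verified Lean document; each statement's English description precedes it below -/
import Mathlib

section
/- Let A=(a_{ij}) be an m×n integer matrix, let ν_1,…,ν_n be positive integers, and let X = {x=(ξ_1,…,ξ_n) ∈ ℤ₊^n : ∑_{j=1}^n a_{ij}ξ_j = 0 for i=1,…,m, and 0 ≤ ξ_j ≤ ν_j for j=1,…,n}. Suppose every row of A has at most r non-zero entries for some r ≥ 2 and every column of A has at most c non-zero entries for some c ≥ 1. If w_1,…,w_n ∈ ℂ satisfy |w_j| ≤ 0.46/(r√c) for all j=1,…,n, then w(X) ≠ 0. -/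
/-!
Write `F V b` for the weighted sum over the box solutions of `a ξ = b` supported in `V`.
Expanding in the exponent `k` of one variable `v ∈ V` gives
`F V b = ∑ₖ w_v^k F (V \ {v}) (b - k a_v)`. Put `T = 0.46/r ≥ |w_j|`. By strong induction
on `V`, whenever `b_i ≠ 0` we have `|F V b| ≤ φ(s) |F V 0|`, where `s` counts the variables of
`V` occurring in row `i` and `φ(s+1)(1 - 2T) = φ(s) + T(1 - T)`, `φ(0) = 0`. For the step take
`v` in row `i`: at most one term of the expansion of `F V b` has a right-hand side vanishing in
row `i`, so all others are bounded through `φ(s - 1)`. In the expansion of `F V 0`, the same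
bound makes the `k ≥ 1` terms small against the `k = 0` term. As `φ(r) ≤ 1`, this gives
`|F V b| ≤ |F V 0|` for every `b`, and then the expansion of `F V 0` yields
`|F V 0| ≥ (1 - 2T)/(1 - T) · |F (V \ {v}) 0| > 0`.
-/

lemma Int.exists_forall_ne_sub_mul_ne_zero {b c : ℤ} (hb : b ≠ 0) (hc : c ≠ 0) :
    ∃ k₀ : ℕ, 1 ≤ k₀ ∧ ∀ k : ℕ, k ≠ k₀ → b - k * c ≠ 0 := by
  by_cases h : ∃ k₀ : ℕ, b - k₀ * c = 0
  · obtain ⟨k₀, hk₀⟩ := h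
    refine ⟨k₀, Nat.one_le_iff_ne_zero.2 ?_, fun k hk hkc => hk ?_⟩
    · rintro rfl
      simp [hb] at hk₀
    · exact_mod_cast mul_right_cancel₀ hc ((sub_eq_zero.1 hkc).symm.trans (sub_eq_zero.1 hk₀))
  · push Not at h
    exact ⟨1, le_rfl, fun k _ => h k⟩

namespace BoxSolutions

open Finset Function

lemma one_sub_div_pow_le_succ {x : ℝ} {n : ℕ} (hn : 0 < n) (hx : x < n) :
    (1 - x / n) ^ n ≤ (1 - x / (n + 1)) ^ (n + 1) := by
  have hn' : (0 : ℝ) < n := by exact_mod_cast hn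
  set p := 1 - x / n with hp_def
  set q := 1 - x / (n + 1) with hq_def
  have hp : 0 < p := by rw [hp_def, sub_pos, div_lt_one hn']; exact hx
  have hq : 0 < q := by rw [hq_def, sub_pos, div_lt_one (by positivity)]; linarith
  -- Bernoulli's inequality for `q / p` is sharp enough: its linear term is exactly `1 / p`.
  have hbern := one_add_mul_le_pow (a := q / p - 1) (by linarith [div_pos hq hp]) (n + 1)
  have hlin : 1 + ((n + 1 : ℕ) : ℝ) * (q / p - 1) = 1 / p := by
    have : (n : ℝ) - x ≠ 0 := by linarith
    rw [hp_def, hq_def]; push_cast; field_simp; ring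
  rw [hlin, add_sub_cancel, div_pow, div_le_div_iff₀ hp (by positivity), pow_succ] at hbern
  nlinarith [pow_pos hp n]

lemma le_one_sub_div_pow {r : ℕ} (hr : 4 ≤ r) : (0.3515 : ℝ) ≤ (1 - 0.92 / r) ^ r := by
  induction r, hr using Nat.le_induction with
  | base => norm_num
  | succ r hr ih =>
    have hr' : (0.92 : ℝ) < r := by
      have : (4 : ℝ) ≤ r := by exact_mod_cast hr
      linarith
    exact ih.trans (by exact_mod_cast one_sub_div_pow_le_succ (by omega) hr')

/-- Solution of `φ (s + 1) * (1 - 2T) = φ s + T (1 - T)` with `φ 0 = 0`: the recursion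
imposed by eliminating one variable of a row. -/
noncomputable def ratioBound (T : ℝ) (s : ℕ) : ℝ := (1 - T) * ((1 - 2 * T)⁻¹ ^ s - 1) / 2

variable {T : ℝ}

lemma one_le_inv_one_sub_two_mul (hT : 0 ≤ T) (hT2 : 2 * T < 1) : 1 ≤ (1 - 2 * T)⁻¹ :=
  one_le_inv₀ (by linarith) |>.mpr (by linarith)

lemma ratioBound_nonneg (hT : 0 ≤ T) (hT2 : 2 * T < 1) (s : ℕ) : 0 ≤ ratioBound T s := by
  have := one_le_pow₀ (n := s) (one_le_inv_one_sub_two_mul hT hT2)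
  unfold ratioBound
  nlinarith

lemma ratioBound_mono (hT : 0 ≤ T) (hT2 : 2 * T < 1) : Monotone (ratioBound T) := by
  intro s s' h
  have := pow_le_pow_right₀ (one_le_inv_one_sub_two_mul hT hT2) h
  unfold ratioBound
  nlinarith

lemma ratioBound_succ_mul (hT2 : 2 * T < 1) (s : ℕ) :
    ratioBound T (s + 1) * (1 - 2 * T) = ratioBound T s + T * (1 - T) := by
  have h : (1 - 2 * T)⁻¹ ^ (s + 1) * (1 - 2 * T) = (1 - 2 * T)⁻¹ ^ s := by
    rw [pow_succ, mul_assoc, inv_mul_cancel₀ (by linarith), mul_one]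
  unfold ratioBound
  linear_combination (1 - T) / 2 * h

lemma ratioBound_step (hT : 0 ≤ T) (hT2 : 2 * T < 1) {s : ℕ} (hs : ratioBound T s ≤ 1) :
    ratioBound T s / (1 - T) + T ≤ ratioBound T (s + 1) * (1 - ratioBound T s * T / (1 - T)) := by
  have h1T : 0 < 1 - T := by linarith
  have hfac : (1 - 2 * T) / (1 - T) ≤ 1 - ratioBound T s * T / (1 - T) := by
    rw [div_le_iff₀ h1T, sub_mul, div_mul_cancel₀ _ h1T.ne']
    nlinarith
  calc ratioBound T s / (1 - T) + T = ratioBound T (s + 1) * ((1 - 2 * T) / (1 - T)) := by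
        rw [mul_div_assoc', ratioBound_succ_mul hT2]; field_simp
    _ ≤ _ := mul_le_mul_of_nonneg_left hfac (ratioBound_nonneg hT hT2 _)

lemma ratioBound_le_one {r : ℕ} (hr : 2 ≤ r) : ratioBound (0.46 / r) r ≤ 1 := by
  have hr' : (2 : ℝ) ≤ r := by exact_mod_cast hr
  set T : ℝ := 0.46 / r with hT_def
  have hT : T ≤ 0.23 := by rw [hT_def, div_le_iff₀ (by positivity)]; nlinarith
  have hT0 : 0 < T := by positivity
  have hpow : 0 < (1 - 2 * T) ^ r := pow_pos (by linarith) r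
  have key : 1 - T ≤ (3 - T) * (1 - 2 * T) ^ r := by
    rcases lt_or_ge r 4 with h4 | h4
    · interval_cases r <;> norm_num [hT_def]
    · have h2T : 1 - 2 * T = 1 - 0.92 / r := by rw [hT_def]; ring
      have hT4 : T ≤ 0.115 := by
        rw [hT_def, div_le_iff₀ (by positivity)]
        have : (4 : ℝ) ≤ r := by exact_mod_cast h4
        nlinarith
      rw [h2T]
      nlinarith [le_one_sub_div_pow h4]
  unfold ratioBound
  rw [inv_pow]
  have : (1 - T) * ((1 - 2 * T) ^ r)⁻¹ ≤ 3 - T := by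
    rw [← div_eq_mul_inv, div_le_iff₀ hpow]; exact key
  linarith

section Estimates

variable {𝕜 : Type*} [NormedField 𝕜] {w : 𝕜} {T : ℝ} {z : ℕ → 𝕜}

lemma norm_sum_Ico_pow_mul_le (hw : ‖w‖ ≤ T) (hT : T < 1) {M : ℝ} (hM : 0 ≤ M)
    (hz : ∀ k, 1 ≤ k → ‖z k‖ ≤ M) (N : ℕ) :
    ‖∑ k ∈ Ico 1 N, w ^ k * z k‖ ≤ T / (1 - T) * M := by
  have hT0 : 0 ≤ T := (norm_nonneg w).trans hw
  calc ‖∑ k ∈ Ico 1 N, w ^ k * z k‖ ≤ ∑ k ∈ Ico 1 N, T ^ k * M := by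
        refine (norm_sum_le _ _).trans (sum_le_sum fun k hk => ?_)
        rw [norm_mul, norm_pow]
        exact mul_le_mul (pow_le_pow_left₀ (norm_nonneg w) hw k) (hz k (mem_Ico.1 hk).1)
          (norm_nonneg _) (pow_nonneg hT0 k)
    _ ≤ T / (1 - T) * M := by
        rw [← sum_mul]
        exact mul_le_mul_of_nonneg_right
          (by simpa using geom_sum_Ico_le_of_lt_one (m := 1) (n := N) hT0 hT) hM

lemma le_norm_sum_range_pow_mul (hw : ‖w‖ ≤ T) (hT : T < 1) {θ : ℝ} (hθ : 0 ≤ θ)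
    (hz : ∀ k, 1 ≤ k → ‖z k‖ ≤ θ * ‖z 0‖) {N : ℕ} (hN : 0 < N) :
    (1 - θ * T / (1 - T)) * ‖z 0‖ ≤ ‖∑ k ∈ range N, w ^ k * z k‖ := by
  rw [sum_range_eq_add_Ico _ hN, pow_zero, one_mul]
  have htail := norm_sum_Ico_pow_mul_le hw hT (by positivity) hz N
  have hrev := norm_sub_le_norm_add (z 0) (∑ k ∈ Ico 1 N, w ^ k * z k)
  have : (1 - θ * T / (1 - T)) * ‖z 0‖ = ‖z 0‖ - T / (1 - T) * (θ * ‖z 0‖) := by ring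
  linarith

lemma norm_sum_range_pow_mul_le (hw : ‖w‖ ≤ T) (hT : T < 1) {θ L : ℝ} (hθ : 0 ≤ θ)
    {k₀ : ℕ} (hk₀ : 1 ≤ k₀) (hz : ∀ k, ‖z k‖ ≤ L) (hzθ : ∀ k, k ≠ k₀ → ‖z k‖ ≤ θ * L)
    (N : ℕ) : ‖∑ k ∈ range N, w ^ k * z k‖ ≤ (θ / (1 - T) + T) * L := by
  have hT0 : 0 ≤ T := (norm_nonneg w).trans hw
  have hL : 0 ≤ L := (norm_nonneg _).trans (hz 0)
  have hzk : ∀ k, ‖z k‖ ≤ θ * L + if k = k₀ then L else 0 := by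
    intro k
    split_ifs with hk
    · linarith [hz k, mul_nonneg hθ hL]
    · simpa using hzθ k hk
  calc ‖∑ k ∈ range N, w ^ k * z k‖
      ≤ ∑ k ∈ range N, T ^ k * (θ * L + if k = k₀ then L else 0) := by
        refine (norm_sum_le _ _).trans (sum_le_sum fun k _ => ?_)
        rw [norm_mul, norm_pow]
        exact mul_le_mul (pow_le_pow_left₀ (norm_nonneg w) hw k) (hzk k) (norm_nonneg _)
          (pow_nonneg hT0 k)
    _ = (∑ k ∈ range N, T ^ k) * (θ * L) + if k₀ ∈ range N then T ^ k₀ * L else 0 := by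
        simp only [mul_add, mul_ite, mul_zero, sum_add_distrib, sum_mul, sum_ite_eq']
    _ ≤ 1 / (1 - T) * (θ * L) + T * L := by
        gcongr
        · simpa using geom_sum_Ico_le_of_lt_one (m := 0) (n := N) hT0 hT
        · split_ifs
          · exact mul_le_mul_of_nonneg_right (pow_le_of_le_one hT0 hT.le (by omega)) hL
          · positivity
    _ = (θ / (1 - T) + T) * L := by ring

end Estimates

variable {m n : ℕ} (a : Fin m → Fin n → ℤ) (ν : Fin n → ℕ)

def solutions (V : Finset (Fin n)) (b : Fin m → ℤ) : Finset ((j : Fin n) → Fin (ν j + 1)) :=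
  {ξ | (∀ i, ∑ j, a i j * ((ξ j : ℕ) : ℤ) = b i) ∧ ∀ j ∉ V, (ξ j : ℕ) = 0}

def solutionWeight {R : Type*} [CommSemiring R] (w : Fin n → R) (V : Finset (Fin n))
    (b : Fin m → ℤ) : R :=
  ∑ ξ ∈ solutions a ν V b, ∏ j, w j ^ (ξ j : ℕ)

variable {a ν} {R : Type*} [CommSemiring R] {w : Fin n → R}

lemma sum_mul_update (c : Fin n → ℤ) (ξ : (j : Fin n) → Fin (ν j + 1)) (v : Fin n)
    (t : Fin (ν v + 1)) :
    ∑ j, c j * ((update ξ v t j : ℕ) : ℤ) = ∑ j, c j * ((ξ j : ℕ) : ℤ) + c v * (t - ξ v) := by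
  rw [← add_sum_erase _ _ (mem_univ v), ← add_sum_erase _ _ (mem_univ v), update_self,
    sum_congr rfl fun j hj => by rw [update_of_ne (ne_of_mem_erase hj)]]
  ring

lemma prod_pow_update (ξ : (j : Fin n) → Fin (ν j + 1)) (v : Fin n) (t : Fin (ν v + 1)) :
    w v ^ (ξ v : ℕ) * ∏ j, w j ^ (update ξ v t j : ℕ) = w v ^ (t : ℕ) * ∏ j, w j ^ (ξ j : ℕ) := by
  rw [← mul_prod_erase _ _ (mem_univ v), ← mul_prod_erase _ _ (mem_univ v), update_self,
    prod_congr rfl fun j hj => by rw [update_of_ne (ne_of_mem_erase hj)]]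
  ring

variable {V : Finset (Fin n)} {b : Fin m → ℤ} {v : Fin n}

lemma update_zero_mem_solutions_erase {ξ : (j : Fin n) → Fin (ν j + 1)}
    (hξ : ξ ∈ solutions a ν V b) :
    update ξ v 0 ∈ solutions a ν (V.erase v) (b - ((ξ v : ℕ) : ℤ) • fun i => a i v) := by
  simp only [solutions, mem_filter_univ, Pi.sub_apply, Pi.smul_apply, smul_eq_mul] at hξ ⊢
  refine ⟨fun i => ?_, fun j hj => ?_⟩
  · rw [sum_mul_update, hξ.1 i, Fin.val_zero]
    ring
  · rcases eq_or_ne j v with rfl | hjv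
    · simp
    · rw [update_of_ne hjv]
      exact hξ.2 j fun hjV => hj (mem_erase.2 ⟨hjv, hjV⟩)

lemma update_mem_solutions (hv : v ∈ V) {ξ : (j : Fin n) → Fin (ν j + 1)} (t : Fin (ν v + 1))
    (hξ : ξ ∈ solutions a ν (V.erase v) (b - ((t : ℕ) : ℤ) • fun i => a i v)) :
    update ξ v t ∈ solutions a ν V b := by
  simp only [solutions, mem_filter_univ, Pi.sub_apply, Pi.smul_apply, smul_eq_mul] at hξ ⊢
  have hξv : (ξ v : ℕ) = 0 := hξ.2 v (notMem_erase v V)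
  refine ⟨fun i => ?_, fun j hj => ?_⟩
  · rw [sum_mul_update, hξ.1 i, hξv]
    ring
  · have hjv : j ≠ v := by rintro rfl; exact hj hv
    rw [update_of_ne hjv]
    exact hξ.2 j fun hjV => hj (mem_of_mem_erase hjV)

lemma solutionWeight_eq_sum_range (w : Fin n → R) (hv : v ∈ V) (b : Fin m → ℤ) :
    solutionWeight a ν w V b = ∑ k ∈ range (ν v + 1),
      w v ^ k * solutionWeight a ν w (V.erase v) (b - (k : ℤ) • fun i => a i v) := by
  rw [← Fin.sum_univ_eq_sum_range, solutionWeight, ← sum_fiberwise _ (fun ξ => ξ v)]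
  refine sum_congr rfl fun t _ => ?_
  rw [solutionWeight, mul_sum]
  refine sum_nbij' (fun ξ => update ξ v 0) (fun ξ => update ξ v t) (fun ξ hξ => ?_)
    (fun ξ hξ => ?_) (fun ξ hξ => ?_) (fun ξ hξ => ?_) (fun ξ hξ => ?_)
  · rw [mem_filter] at hξ
    simpa [hξ.2] using update_zero_mem_solutions_erase (v := v) hξ.1
  · exact mem_filter.2 ⟨update_mem_solutions hv t hξ, update_self ..⟩
  · rw [mem_filter] at hξ
    rw [update_idem, ← hξ.2, update_eq_self]
  · have hξv : ξ v = 0 := by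
      simp only [solutions, mem_filter_univ] at hξ
      exact Fin.ext (hξ.2 v (notMem_erase v V))
    rw [update_idem, ← hξv, update_eq_self]
  · rw [mem_filter] at hξ
    rw [← hξ.2, prod_pow_update, Fin.val_zero, pow_zero, one_mul]

lemma solutionWeight_empty_zero (w : Fin n → R) : solutionWeight a ν w ∅ 0 = 1 := by
  rw [solutionWeight, sum_eq_single_of_mem 0]
  · simp
  · simp [solutions]
  · intro ξ hξ hξ0
    simp only [solutions, mem_filter_univ, notMem_empty, not_false_eq_true, forall_const] at hξ
    exact absurd (funext fun j => Fin.ext (hξ.2 j)) hξ0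

lemma solutionWeight_eq_zero (w : Fin n → R) (i : Fin m) (hV : ∀ j ∈ V, a i j = 0)
    (hb : b i ≠ 0) : solutionWeight a ν w V b = 0 := by
  refine sum_eq_zero fun ξ hξ => absurd ?_ hb
  simp only [solutions, mem_filter_univ] at hξ
  rw [← hξ.1 i]
  refine sum_eq_zero fun j _ => ?_
  by_cases hj : j ∈ V
  · rw [hV j hj, zero_mul]
  · rw [hξ.2 j hj, Nat.cast_zero, mul_zero]


def activeCount (a : Fin m → Fin n → ℤ) (V : Finset (Fin n)) (i : Fin m) : ℕ :=
  #{j ∈ V | a i j ≠ 0}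

lemma ratioBound_activeCount_le_one {T : ℝ} (hT : 0 ≤ T) (hT2 : 2 * T < 1)
    (hφ : ∀ i, ratioBound T (activeCount a univ i) ≤ 1) (V : Finset (Fin n)) (i : Fin m) :
    ratioBound T (activeCount a V i) ≤ 1 :=
  (ratioBound_mono hT hT2 (card_le_card (filter_subset_filter _ (subset_univ V)))).trans (hφ i)

section Induction

variable {𝕜 : Type*} [NormedField 𝕜] (a ν) (w : Fin n → 𝕜) (T : ℝ)

def RatioBounded (V : Finset (Fin n)) : Prop :=
  ∀ (b : Fin m → ℤ) (i : Fin m), b i ≠ 0 →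
    ‖solutionWeight a ν w V b‖ ≤ ratioBound T (activeCount a V i) * ‖solutionWeight a ν w V 0‖

variable {a ν w T} {V : Finset (Fin n)} {v : Fin n}

lemma norm_solutionWeight_le (hT : 0 ≤ T) (hT2 : 2 * T < 1)
    (hφ : ∀ i, ratioBound T (activeCount a univ i) ≤ 1) (hV : RatioBounded a ν w T V)
    (b : Fin m → ℤ) : ‖solutionWeight a ν w V b‖ ≤ ‖solutionWeight a ν w V 0‖ := by
  obtain rfl | hb := eq_or_ne b 0
  · exact le_rfl
  · obtain ⟨i, hi⟩ := Function.ne_iff.1 hb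
    exact (hV b i hi).trans
      (mul_le_of_le_one_left (norm_nonneg _) (ratioBound_activeCount_le_one hT hT2 hφ V i))

lemma le_norm_solutionWeight_zero (hw : ∀ j, ‖w j‖ ≤ T) (hT : T < 1) (hv : v ∈ V) {θ : ℝ}
    (hθ : 0 ≤ θ)
    (h : ∀ k : ℕ, 1 ≤ k → ‖solutionWeight a ν w (V.erase v) (-(k : ℤ) • fun i => a i v)‖ ≤
      θ * ‖solutionWeight a ν w (V.erase v) 0‖) :
    (1 - θ * T / (1 - T)) * ‖solutionWeight a ν w (V.erase v) 0‖ ≤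
      ‖solutionWeight a ν w V 0‖ := by
  rw [solutionWeight_eq_sum_range w hv]
  simpa using le_norm_sum_range_pow_mul (hw v) hT hθ
    (z := fun k : ℕ => solutionWeight a ν w (V.erase v) (0 - (k : ℤ) • fun i => a i v))
    (by simpa using h) (Nat.succ_pos (ν v))

lemma norm_solutionWeight_le_of_mem (hT : 0 ≤ T) (hT2 : 2 * T < 1) (hw : ∀ j, ‖w j‖ ≤ T)
    (hφ : ∀ i, ratioBound T (activeCount a univ i) ≤ 1) (hv : v ∈ V) {b : Fin m → ℤ}
    {i : Fin m} (hb : b i ≠ 0) (hav : a i v ≠ 0) (hW : RatioBounded a ν w T (V.erase v)) :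
    ‖solutionWeight a ν w V b‖ ≤ (ratioBound T (activeCount a (V.erase v) i) / (1 - T) + T) *
      ‖solutionWeight a ν w (V.erase v) 0‖ := by
  obtain ⟨k₀, hk₀, hroot⟩ := Int.exists_forall_ne_sub_mul_ne_zero hb hav
  rw [solutionWeight_eq_sum_range w hv]
  refine norm_sum_range_pow_mul_le (hw v) (by linarith) (ratioBound_nonneg hT hT2 _) hk₀
    (fun k => norm_solutionWeight_le hT hT2 hφ hW _) (fun k hk => hW _ i ?_) _
  simpa using hroot k hk

lemma ratioBounded_of_erase (hT : 0 ≤ T) (hT2 : 2 * T < 1) (hw : ∀ j, ‖w j‖ ≤ T)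
    (hφ : ∀ i, ratioBound T (activeCount a univ i) ≤ 1)
    (h : ∀ v ∈ V, RatioBounded a ν w T (V.erase v)) : RatioBounded a ν w T V := by
  intro b i hb
  by_cases hrow : ∀ j ∈ V, a i j = 0
  · rw [solutionWeight_eq_zero w i hrow hb, norm_zero]
    exact mul_nonneg (ratioBound_nonneg hT hT2 _) (norm_nonneg _)
  push Not at hrow
  obtain ⟨v, hv, hav⟩ := hrow
  have hcount : activeCount a V i = activeCount a (V.erase v) i + 1 := by
    rw [activeCount, activeCount, filter_erase, card_erase_add_one (mem_filter.2 ⟨hv, hav⟩)]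
  set s := activeCount a (V.erase v) i
  have hs : ratioBound T s ≤ 1 := ratioBound_activeCount_le_one hT hT2 hφ _ i
  have hlower := le_norm_solutionWeight_zero hw (by linarith) hv (ratioBound_nonneg hT hT2 s)
    fun k hk => h v hv _ i (by simpa [hav] using Nat.one_le_iff_ne_zero.1 hk)
  calc ‖solutionWeight a ν w V b‖
      ≤ (ratioBound T s / (1 - T) + T) * ‖solutionWeight a ν w (V.erase v) 0‖ :=
        norm_solutionWeight_le_of_mem hT hT2 hw hφ hv hb hav (h v hv)
    _ ≤ ratioBound T (s + 1) * ((1 - ratioBound T s * T / (1 - T)) *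
          ‖solutionWeight a ν w (V.erase v) 0‖) := by
        rw [← mul_assoc]
        exact mul_le_mul_of_nonneg_right (ratioBound_step hT hT2 hs) (norm_nonneg _)
    _ ≤ ratioBound T (activeCount a V i) * ‖solutionWeight a ν w V 0‖ := by
        rw [hcount]
        exact mul_le_mul_of_nonneg_left hlower (ratioBound_nonneg hT hT2 _)

theorem ratioBounded (hT : 0 ≤ T) (hT2 : 2 * T < 1) (hw : ∀ j, ‖w j‖ ≤ T)
    (hφ : ∀ i, ratioBound T (activeCount a univ i) ≤ 1) (V : Finset (Fin n)) :
    RatioBounded a ν w T V := by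
  induction V using Finset.strongInduction with
  | H V ih => exact ratioBounded_of_erase hT hT2 hw hφ fun v hv => ih _ (erase_ssubset hv)

theorem solutionWeight_zero_ne_zero (hT : 0 ≤ T) (hT2 : 2 * T < 1) (hw : ∀ j, ‖w j‖ ≤ T)
    (hφ : ∀ i, ratioBound T (activeCount a univ i) ≤ 1) (V : Finset (Fin n)) :
    solutionWeight a ν w V 0 ≠ 0 := by
  induction V using Finset.strongInduction with
  | H V ih =>
  obtain rfl | ⟨v, hv⟩ := V.eq_empty_or_nonempty
  · rw [solutionWeight_empty_zero]
    exact one_ne_zero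
  have hL : 0 < ‖solutionWeight a ν w (V.erase v) 0‖ :=
    norm_pos_iff.2 (ih _ (erase_ssubset hv))
  have hlower := le_norm_solutionWeight_zero (ν := ν) hw (by linarith) hv zero_le_one fun k _ => by
    rw [one_mul]
    exact norm_solutionWeight_le hT hT2 hφ (ratioBounded hT hT2 hw hφ _) _
  have hfac : 0 < 1 - 1 * T / (1 - T) := by
    rw [sub_pos, one_mul, div_lt_one (by linarith)]
    linarith
  exact norm_pos_iff.1 (lt_of_lt_of_le (mul_pos hfac hL) hlower)

end Induction

end BoxSolutions

theorem stmt0_general (m n : ℕ) (a : Fin m → Fin n → ℤ) (ν : Fin n → ℕ)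
    (r c : ℕ) (hr : 2 ≤ r) (hc : 1 ≤ c)
    (hrow : ∀ i, (Finset.univ.filter fun j => a i j ≠ 0).card ≤ r)
    (w : Fin n → ℂ) (hw : ∀ j, ‖w j‖ ≤ 0.46 / (r * Real.sqrt c)) :
    (∑ ξ ∈ Finset.univ.filter
        (fun ξ : (j : Fin n) → Fin (ν j + 1) => ∀ i, ∑ j, a i j * ((ξ j : ℕ) : ℤ) = 0),
      ∏ j, w j ^ (ξ j : ℕ)) ≠ 0 := by
  have hr' : (2 : ℝ) ≤ r := by exact_mod_cast hr
  have hT2 : 2 * (0.46 / r : ℝ) < 1 := by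
    rw [mul_div_assoc', div_lt_one (by positivity)]
    linarith
  have hw' : ∀ j, ‖w j‖ ≤ 0.46 / r := fun j => (hw j).trans <| by
    gcongr
    exact le_mul_of_one_le_right (by positivity) (Real.one_le_sqrt.2 (by exact_mod_cast hc))
  have hφ : ∀ i,
      BoxSolutions.ratioBound (0.46 / r) (BoxSolutions.activeCount a Finset.univ i) ≤ 1 :=
    fun i => (BoxSolutions.ratioBound_mono (by positivity) hT2 (hrow i)).trans
      (BoxSolutions.ratioBound_le_one hr)
  simpa [BoxSolutions.solutionWeight, BoxSolutions.solutions] using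
    BoxSolutions.solutionWeight_zero_ne_zero (ν := ν) (by positivity) hT2 hw' hφ Finset.univ

/-- **Theorem 1.2.** Let `A = (a_{ij})` be an `m × n` integer matrix whose rows have at most
`r ≥ 2` non-zero entries and whose columns have at most `c ≥ 1` non-zero entries, let
`ν_1, …, ν_n` be positive integers, and let
`X = {ξ ∈ ℤ₊ⁿ : ∑_j a_{ij} ξ_j = 0 for all i, 0 ≤ ξ_j ≤ ν_j}` (here encoded as tuples
`ξ` with `ξ_j ∈ {0, …, ν_j}`).  If `|w_j| ≤ 0.46/(r√c)` for all `j`, then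
`w(X) = ∑_{ξ ∈ X} w_1^{ξ_1} ⋯ w_n^{ξ_n} ≠ 0`. -/
theorem stmt0 (m n : ℕ) (a : Fin m → Fin n → ℤ) (ν : Fin n → ℕ) (hν : ∀ j, 0 < ν j)
    (r c : ℕ) (hr : 2 ≤ r) (hc : 1 ≤ c)
    (hrow : ∀ i, (Finset.univ.filter fun j => a i j ≠ 0).card ≤ r)
    (hcol : ∀ j, (Finset.univ.filter fun i => a i j ≠ 0).card ≤ c)
    (w : Fin n → ℂ) (hw : ∀ j, ‖w j‖ ≤ 0.46 / (r * Real.sqrt c)) :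
    (∑ ξ ∈ Finset.univ.filter
        (fun ξ : (j : Fin n) → Fin (ν j + 1) => ∀ i, ∑ j, a i j * ((ξ j : ℕ) : ℤ) = 0),
      ∏ j, w j ^ (ξ j : ℕ)) ≠ 0 :=
  stmt0_general m n a ν r c hr hc hrow w hw
end

section
/- Let (Ω, 𝒫) be a probability space, let f: Ω → ℂ be a random variable with E|f| < +∞, and let 0 ≤ θ < 2π/3 be a real number such that f(ω) ≠ 0 for all ω ∈ Ω and the angle between f(ω_1) and f(ω_2) does not exceed θ for all ω_1, ω_2 ∈ Ω. Then |E f| ≥ cos(θ/2) · E|f|. -/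
/-! Normalize by one value `f ω₀`: the arguments `arg (f ω / f ω₀)` lie in `[-θ, θ]`, and since
`3θ < 2π` their pairwise differences are the arguments `arg (f ω₁ / f ω₂)`, so all of them lie in
an interval of length `θ`. Rotating its midpoint onto the positive real axis gives a unit `e` with
`cos (θ/2) ‖f‖ ≤ Re (e f)` pointwise; integrating, `cos (θ/2) E‖f‖ ≤ Re (e E f) ≤ ‖E f‖`. -/

open MeasureTheory

/-- The angle between two complex numbers, regarded as vectors in `ℝ² = ℂ`. -/
noncomputable def cangle (u v : ℂ) : ℝ :=
  Real.arccos ((u * (starRingEnd ℂ) v).re / (‖u‖ * ‖v‖))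

open Complex

theorem cangle_eq_abs_arg_div {u v : ℂ} (hu : u ≠ 0) (hv : v ≠ 0) :
    cangle u v = |arg (u / v)| := by
  have hmul : u * (starRingEnd ℂ) v = (normSq v : ℝ) * (u / v) := by
    rw [← mul_conj]
    field_simp
  have harg : arg (u * (starRingEnd ℂ) v) = arg (u / v) := by
    rw [hmul, arg_real_mul _ (normSq_pos.2 hv)]
  have hcos : (u * (starRingEnd ℂ) v).re / (‖u‖ * ‖v‖) = Real.cos (arg (u / v)) := by
    rw [← harg, cos_arg (mul_ne_zero hu (by simpa using hv)), norm_mul, norm_conj]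
  rw [cangle, hcos, ← Real.cos_abs, Real.arccos_cos (abs_nonneg _)
    (abs_le.2 ⟨(neg_pi_lt_arg _).le, arg_le_pi _⟩)]

theorem Real.Angle.eq_of_coe_eq_of_abs_sub_lt {a b : ℝ} (h : (a : Real.Angle) = b)
    (hab : |a - b| < 2 * Real.pi) : a = b := by
  obtain ⟨k, hk⟩ := Real.Angle.angle_eq_iff_two_pi_dvd_sub.1 h
  have hk1 : |(k : ℝ)| < 1 := by
    rw [hk, abs_mul, abs_of_pos Real.two_pi_pos] at hab
    nlinarith [Real.two_pi_pos]
  have hk0 : k = 0 := Int.abs_lt_one_iff.1 (by exact_mod_cast hk1)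
  simpa [hk0, sub_eq_zero] using hk

theorem Complex.arg_div_sub_arg_div {u v w : ℂ} (hu : u ≠ 0) (hv : v ≠ 0) (hw : w ≠ 0)
    (h : |arg (u / w)| + |arg (v / w)| + |arg (u / v)| < 2 * Real.pi) :
    arg (u / w) - arg (v / w) = arg (u / v) := by
  refine Real.Angle.eq_of_coe_eq_of_abs_sub_lt ?_ ?_
  · rw [Real.Angle.coe_sub, arg_div_coe_angle hu hw, arg_div_coe_angle hv hw,
      arg_div_coe_angle hu hv]
    abel
  · calc |arg (u / w) - arg (v / w) - arg (u / v)|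
        ≤ |arg (u / w)| + |arg (v / w)| + |arg (u / v)| := by
          linarith [abs_sub (arg (u / w) - arg (v / w)) (arg (u / v)),
            abs_sub (arg (u / w)) (arg (v / w))]
      _ < 2 * Real.pi := h

theorem exists_forall_abs_sub_le_half {ι : Type*} [Nonempty ι] (x : ι → ℝ) {d : ℝ}
    (hx : ∀ i j, |x i - x j| ≤ d) : ∃ c, ∀ i, |x i - c| ≤ d / 2 := by
  obtain ⟨i₀⟩ := ‹Nonempty ι›
  have hbddA : BddAbove (Set.range x) :=
    ⟨x i₀ + d, by rintro _ ⟨i, rfl⟩; linarith [(abs_le.1 (hx i i₀)).2]⟩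
  have hbddB : BddBelow (Set.range x) :=
    ⟨x i₀ - d, by rintro _ ⟨i, rfl⟩; linarith [(abs_le.1 (hx i₀ i)).2]⟩
  have hle : ∀ i, x i ≤ ⨆ j, x j := fun i => le_ciSup hbddA i
  have hge : ∀ i, ⨅ j, x j ≤ x i := fun i => ciInf_le hbddB i
  have hwidth : (⨆ j, x j) ≤ (⨅ j, x j) + d :=
    ciSup_le fun i => by
      have : x i - d ≤ ⨅ j, x j := le_ciInf fun j => by linarith [(abs_le.1 (hx i j)).2]
      linarith
  refine ⟨((⨆ j, x j) + ⨅ j, x j) / 2, fun i => abs_le.2 ⟨?_, ?_⟩⟩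
  · linarith [hge i]
  · linarith [hle i]

theorem Complex.re_exp_neg_mul_I_mul (z : ℂ) (t : ℝ) :
    (exp (-(t * I)) * z).re = ‖z‖ * Real.cos (arg z - t) := by
  conv_lhs => rw [← norm_mul_exp_arg_mul_I z]
  rw [mul_left_comm, ← exp_add, re_ofReal_mul, ← exp_ofReal_mul_I_re]
  congr 3
  push_cast
  ring

theorem exists_norm_eq_one_cos_half_mul_norm_le_re {ι : Type*} (f : ι → ℂ) {θ : ℝ}
    (hθ : θ < 2 * Real.pi / 3) (hne : ∀ i, f i ≠ 0) (hang : ∀ i j, cangle (f i) (f j) ≤ θ) :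
    ∃ e : ℂ, ‖e‖ = 1 ∧ ∀ i, Real.cos (θ / 2) * ‖f i‖ ≤ (e * f i).re := by
  rcases isEmpty_or_nonempty (α := ι) with hι | hι
  · exact ⟨1, norm_one, isEmptyElim⟩
  have ⟨i₀⟩ := hι
  have harg : ∀ i j, |arg (f i / f j)| ≤ θ := fun i j => by
    rw [← cangle_eq_abs_arg_div (hne i) (hne j)]
    exact hang i j
  have hspread : ∀ i j, |arg (f i / f i₀) - arg (f j / f i₀)| ≤ θ := fun i j => by
    rw [arg_div_sub_arg_div (hne i) (hne j) (hne i₀)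
      (by linarith [harg i i₀, harg j i₀, harg i j])]
    exact harg i j
  obtain ⟨c, hc⟩ := exists_forall_abs_sub_le_half _ hspread
  refine ⟨exp (-(c * I)) * (‖f i₀‖ / f i₀), ?_, fun i => ?_⟩
  · simp [norm_exp, hne i₀]
  have hrot : exp (-(c * I)) * (‖f i₀‖ / f i₀) * f i =
      exp (-(c * I)) * (‖f i₀‖ * (f i / f i₀)) := by
    field_simp
  rw [hrot, re_exp_neg_mul_I_mul, arg_real_mul _ (norm_pos_iff.2 (hne i₀))]
  have hnorm : ‖(‖f i₀‖ : ℂ) * (f i / f i₀)‖ = ‖f i‖ := by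
    rw [norm_mul, norm_div, norm_real, norm_norm, mul_div_cancel₀ _ (norm_ne_zero_iff.2 (hne i₀))]
  have hcos : Real.cos (θ / 2) ≤ Real.cos (arg (f i / f i₀) - c) := by
    rw [← Real.cos_abs (arg (f i / f i₀) - c)]
    exact Real.cos_le_cos_of_nonneg_of_le_pi (abs_nonneg _) (by linarith [Real.pi_pos]) (hc i)
  rw [hnorm, mul_comm]
  exact mul_le_mul_of_nonneg_left hcos (norm_nonneg _)

theorem mul_integral_norm_le_norm_integral {Ω : Type*} [MeasurableSpace Ω] {μ : Measure Ω}
    {f : Ω → ℂ} (hf : Integrable f μ) {e : ℂ} (he : ‖e‖ ≤ 1) {r : ℝ}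
    (hre : ∀ᵐ ω ∂μ, r * ‖f ω‖ ≤ (e * f ω).re) :
    r * ∫ ω, ‖f ω‖ ∂μ ≤ ‖∫ ω, f ω ∂μ‖ :=
  calc r * ∫ ω, ‖f ω‖ ∂μ = ∫ ω, r * ‖f ω‖ ∂μ := (integral_const_mul _ _).symm
    _ ≤ ∫ ω, (e * f ω).re ∂μ := integral_mono_ae (hf.norm.const_mul r) (hf.const_mul e).re hre
    _ = (e * ∫ ω, f ω ∂μ).re := by
      rw [← integral_const_mul]
      exact integral_re (hf.const_mul e)
    _ ≤ ‖e * ∫ ω, f ω ∂μ‖ := re_le_norm _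
    _ ≤ ‖∫ ω, f ω ∂μ‖ := by
      rw [norm_mul]
      exact mul_le_of_le_one_left (norm_nonneg _) he

theorem stmt4_general {Ω : Type*} [MeasurableSpace Ω] (P : Measure Ω)
    (f : Ω → ℂ) (hf : Integrable f P)
    (θ : ℝ) (hθ1 : θ < 2 * Real.pi / 3)
    (hne : ∀ ω, f ω ≠ 0)
    (hang : ∀ ω₁ ω₂, cangle (f ω₁) (f ω₂) ≤ θ) :
    Real.cos (θ / 2) * (∫ ω, ‖f ω‖ ∂P) ≤ ‖∫ ω, f ω ∂P‖ := by
  obtain ⟨e, he, hre⟩ := exists_norm_eq_one_cos_half_mul_norm_le_re f hθ1 hne hang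
  exact mul_integral_norm_le_norm_integral hf he.le (.of_forall hre)

/-- **Lemma 3.4.** Let `f` be an integrable complex random variable on a probability space,
nowhere zero, such that the angle between any two of its values is at most `θ` for some
`0 ≤ θ < 2π/3`.  Then `|E f| ≥ cos(θ/2) ⬝ E |f|`. -/
theorem stmt4 {Ω : Type*} [MeasurableSpace Ω] (P : Measure Ω) [IsProbabilityMeasure P]
    (f : Ω → ℂ) (hf : Integrable f P)
    (θ : ℝ) (hθ0 : 0 ≤ θ) (hθ1 : θ < 2 * Real.pi / 3)
    (hne : ∀ ω, f ω ≠ 0)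
    (hang : ∀ ω₁ ω₂, cangle (f ω₁) (f ω₂) ≤ θ) :
    Real.cos (θ / 2) * (∫ ω, ‖f ω‖ ∂P) ≤ ‖∫ ω, f ω ∂P‖ :=
  stmt4_general P f hf θ hθ1 hne hang
end

section
/- Let G_1 = (V_1, E_1) be a connected undirected graph without loops or multiple edges whose edges are given an arbitrary orientation, let G_2 = (V_2, E_2) be a connected undirected graph without multiple edges but possibly with loops, V_2 = {1,…,n}, and fix a vertex a ∈ V_1. Consider 0-1 variables x^{uv}_{ij} indexed by directed edges (u,v) ∈ E_1 and ordered pairs 1 ≤ i,j ≤ n with {i,j} ∈ E_2 (possibly i = j). For neighbors u, v in G_1 and i ∈ V_2, set S^{u,v}_i = ∑_{j: {i,j} ∈ E_2} x^{uv}_{ij} if (u,v) ∈ E_1, and S^{u,v}_i = ∑_{j: {i,j} ∈ E_2} x^{vu}_{ji} if (v,u) ∈ E_1. Consider the system: (i) for every u ∈ V_1 and every i ∈ V_2, the sums S^{u,v}_i are equal for all neighbors v of u; (ii) for every neighbor v of a, S^{a,v}_n = 1 and S^{a,v}_j = 0 for all j ≠ n. Then the assignment x^{uv}_{ij} = 1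 if φ(u) = i and φ(v) = j, and x^{uv}_{ij} = 0 otherwise, defines a bijection between the set of graph homomorphisms φ: G_1 → G_2 with φ(a) = n and the set of 0-1 solutions of this system. -/
open Classical in
/-- The sum `S^{u,v}_i` of (2.2.2): for neighbours `u, v` of `G₁`, if the edge is oriented
as `(u,v)` then `S^{u,v}_i = ∑_{j : {i,j} ∈ E₂} x^{uv}_{ij}`, and if it is oriented as
`(v,u)` then `S^{u,v}_i = ∑_{j : {i,j} ∈ E₂} x^{vu}_{ji}`.  Here `o u v` means the edge
`{u,v}` is oriented as `(u,v)`. -/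
noncomputable def Ssum {V₁ : Type*} (n : ℕ) (E₂ : Fin n → Fin n → Prop)
    (o : V₁ → V₁ → Prop) (x : V₁ → V₁ → Fin n → Fin n → ℕ) (u v : V₁) (i : Fin n) : ℕ :=
  if o u v then ∑ j ∈ Finset.univ.filter (fun j => E₂ i j), x u v i j
  else ∑ j ∈ Finset.univ.filter (fun j => E₂ i j), x v u j i

/-!
A solution `x` determines, for each vertex `u` of `G₁`, the "marginal" `i ↦ S^{u,v}_i`, which by
(i) does not depend on the neighbour `v`. Its total mass `∑ᵢ S^{u,v}_i = ∑ᵢⱼ x^{uv}_{ij}` is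
symmetric in `u` and `v`, so by connectedness it equals the value `1` prescribed at `a` by (ii).
A marginal of mass one is the indicator of a single label `φ u`. The matrix `x^{uv}` then has
row sums `[i = φ u]` and column sums `[j = φ v]`, so it is the indicator of `(φ u, φ v)`: `x` is
the encoding of `φ`, and its support condition says exactly that `φ` is a homomorphism.
-/

open Finset

namespace SimpleGraph

variable {V : Type*} {G : SimpleGraph V}

lemma Preconnected.exists_adj_of_ne (hG : G.Preconnected) {u a : V} (hne : u ≠ a) :
    ∃ v, G.Adj u v := by
  obtain ⟨p⟩ := hG u a
  cases p with
  | nil => exact absurd rfl hne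
  | cons h _ => exact ⟨_, h⟩

lemma Preconnected.induction_on_adj {P : V → Prop} (hG : G.Preconnected) {a : V} (ha : P a)
    (hstep : ∀ u v, G.Adj u v → P u → P v) (u : V) : P u := by
  induction (reachable_iff_reflTransGen a u).1 (hG a u) with
  | refl => exact ha
  | tail _ hadj ih => exact hstep _ _ hadj ih

end SimpleGraph

lemma Finset.exists_eq_ite_of_sum_eq_one {α : Type*} [Fintype α] [DecidableEq α] {f : α → ℕ}
    (h : ∑ i, f i = 1) : ∃ p, ∀ i, f i = if i = p then 1 else 0 := by
  obtain ⟨p, -, hp⟩ := exists_ne_zero_of_sum_ne_zero (h ▸ one_ne_zero)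
  refine ⟨p, fun i => ?_⟩
  split_ifs with hi
  · subst hi
    have := single_le_sum (fun j _ => Nat.zero_le (f j)) (mem_univ i)
    omega
  · have := sum_le_sum_of_subset (f := f) (subset_univ {i, p})
    rw [sum_pair hi, h] at this
    omega

lemma eq_ite_of_row_col_sums {α β : Type*} [Fintype α] [Fintype β] [DecidableEq α]
    [DecidableEq β] {M : α → β → ℕ} {p : α} {q : β}
    (hrow : ∀ i, ∑ j, M i j = if i = p then 1 else 0)
    (hcol : ∀ j, ∑ i, M i j = if j = q then 1 else 0) (i : α) (j : β) :
    M i j = if i = p ∧ j = q then 1 else 0 := by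
  have hzero : ∀ i j, ¬(i = p ∧ j = q) → M i j = 0 := by
    intro i j hij
    rcases not_and_or.1 hij with hi | hj
    · have := single_le_sum (fun j _ => Nat.zero_le (M i j)) (mem_univ j)
      rw [hrow, if_neg hi] at this
      omega
    · have := single_le_sum (fun i _ => Nat.zero_le (M i j)) (mem_univ i)
      rw [hcol, if_neg hj] at this
      omega
  split_ifs with hij
  · obtain ⟨rfl, rfl⟩ := hij
    simpa [sum_eq_single j fun j' _ hj' => hzero i j' fun h => hj' h.2] using hrow i
  · exact hzero i j hij

section Encoding

open Classical

variable {V : Type*} {G : SimpleGraph V} {n : ℕ} {E₂ : Fin n → Fin n → Prop}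
  {o : V → V → Prop} {x : V → V → Fin n → Fin n → ℕ} {φ ψ : V → Fin n}

noncomputable def homEncoding (o : V → V → Prop) (φ : V → Fin n) : V → V → Fin n → Fin n → ℕ :=
  fun u v i j => if o u v ∧ φ u = i ∧ φ v = j then 1 else 0

def HasMarginals (G : SimpleGraph V) (n : ℕ) (E₂ : Fin n → Fin n → Prop) (o : V → V → Prop)
    (x : V → V → Fin n → Fin n → ℕ) (φ : V → Fin n) : Prop :=
  ∀ u v, G.Adj u v → ∀ i, Ssum n E₂ o x u v i = if i = φ u then 1 else 0

lemma Ssum_eq_sum_univ (hE₂ : Symmetric E₂) (hx : ∀ u v i j, x u v i j ≠ 0 → E₂ i j)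
    (u v : V) (i : Fin n) :
    Ssum n E₂ o x u v i = if o u v then ∑ j, x u v i j else ∑ j, x v u j i := by
  unfold Ssum
  split
  · exact sum_subset (filter_subset _ _) fun j _ hj =>
      by_contra fun h0 => hj (mem_filter.2 ⟨mem_univ _, hx u v i j h0⟩)
  · exact sum_subset (filter_subset _ _) fun j _ hj =>
      by_contra fun h0 => hj (mem_filter.2 ⟨mem_univ _, hE₂ (hx v u j i h0)⟩)

lemma sum_Ssum_comm (hE₂ : Symmetric E₂) (hx : ∀ u v i j, x u v i j ≠ 0 → E₂ i j) {u v : V}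
    (huv : o u v ↔ ¬ o v u) : ∑ i, Ssum n E₂ o x u v i = ∑ i, Ssum n E₂ o x v u i := by
  simp only [Ssum_eq_sum_univ hE₂ hx]
  by_cases h : o u v
  · simp only [if_pos h, if_neg (huv.1 h)]
    exact sum_comm
  · simp only [if_neg h, if_pos (not_not.1 (mt huv.2 h))]
    exact sum_comm

lemma sum_Ssum_eq_one (hG : G.Preconnected) (hE₂ : Symmetric E₂)
    (hx : ∀ u v i j, x u v i j ≠ 0 → E₂ i j) (ho' : ∀ u v, G.Adj u v → (o u v ↔ ¬ o v u))
    (hcompat : ∀ u v w, G.Adj u v → G.Adj u w → ∀ i, Ssum n E₂ o x u v i = Ssum n E₂ o x u w i)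
    {a : V} (ha : ∀ v, G.Adj a v → ∑ i, Ssum n E₂ o x a v i = 1) :
    ∀ u v, G.Adj u v → ∑ i, Ssum n E₂ o x u v i = 1 :=
  hG.induction_on_adj ha fun u v huv hu w hvw => calc
    ∑ i, Ssum n E₂ o x v w i = ∑ i, Ssum n E₂ o x v u i :=
      sum_congr rfl fun i _ => hcompat v w u hvw huv.symm i
    _ = ∑ i, Ssum n E₂ o x u v i := sum_Ssum_comm hE₂ hx (ho' v u huv.symm)
    _ = 1 := hu v huv

lemma homEncoding_support_iff (hE₂ : Symmetric E₂) (ho : ∀ u v, o u v → G.Adj u v)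
    (ho' : ∀ u v, G.Adj u v → (o u v ↔ ¬ o v u)) :
    (∀ u v i j, homEncoding o φ u v i j ≠ 0 → o u v ∧ E₂ i j) ↔
      ∀ u v, G.Adj u v → E₂ (φ u) (φ v) := by
  constructor
  · intro h u v huv
    by_cases h' : o u v
    · exact (h u v (φ u) (φ v) (by simp [homEncoding, h'])).2
    · have h'' : o v u := not_not.1 (mt (ho' u v huv).2 h')
      exact hE₂ (h v u (φ v) (φ u) (by simp [homEncoding, h''])).2
  · intro h u v i j hne
    obtain ⟨huv, rfl, rfl⟩ : o u v ∧ φ u = i ∧ φ v = j := by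
      by_contra hc
      exact hne (if_neg hc : homEncoding o φ u v i j = 0)
    exact ⟨huv, h u v (ho u v huv)⟩

lemma hasMarginals_homEncoding (hφ : ∀ u v, G.Adj u v → E₂ (φ u) (φ v))
    (ho' : ∀ u v, G.Adj u v → (o u v ↔ ¬ o v u)) : HasMarginals G n E₂ o (homEncoding o φ) φ := by
  intro u v huv i
  unfold Ssum homEncoding
  by_cases h : o u v
  · split_ifs with hi
    · simp [h, hi, hφ u v huv]
    · simp [h, Ne.symm hi]
  · have h' : o v u := not_not.1 (mt (ho' u v huv).2 h)
    split_ifs with hi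
    · simp [h', hi, hφ u v huv]
    · simp [h', Ne.symm hi]

lemma HasMarginals.eq_of_adj (hφ : HasMarginals G n E₂ o x φ) (hψ : HasMarginals G n E₂ o x ψ)
    {u v : V} (huv : G.Adj u v) : φ u = ψ u := by
  simpa using (hφ u v huv (φ u)).symm.trans (hψ u v huv (φ u))

lemma exists_hasMarginals (hG : G.Preconnected) (hE₂ : Symmetric E₂)
    (hx : ∀ u v i j, x u v i j ≠ 0 → E₂ i j) (ho' : ∀ u v, G.Adj u v → (o u v ↔ ¬ o v u))
    (hcompat : ∀ u v w, G.Adj u v → G.Adj u w → ∀ i, Ssum n E₂ o x u v i = Ssum n E₂ o x u w i)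
    {a : V} {i₀ : Fin n}
    (ha : ∀ v, G.Adj a v → ∀ i, Ssum n E₂ o x a v i = if i = i₀ then 1 else 0) :
    ∃ φ, φ a = i₀ ∧ HasMarginals G n E₂ o x φ := by
  have htotal := sum_Ssum_eq_one hG hE₂ hx ho' hcompat (a := a) fun v hav => by simp [ha v hav]
  have hlabel : ∀ u, ∃ p, (u = a → p = i₀) ∧
      ∀ v, G.Adj u v → ∀ i, Ssum n E₂ o x u v i = if i = p then 1 else 0 := by
    intro u
    by_cases hu : ∃ w, G.Adj u w
    · obtain ⟨w, huw⟩ := hu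
      obtain ⟨p, hp⟩ := exists_eq_ite_of_sum_eq_one (htotal u w huw)
      refine ⟨p, ?_, fun v huv i => (hcompat u v w huv huw i).trans (hp i)⟩
      rintro rfl
      simpa using (hp p).symm.trans (ha w huw p)
    · exact ⟨i₀, fun _ => rfl, fun v huv => absurd ⟨v, huv⟩ hu⟩
  choose φ hφa hφ using hlabel
  exact ⟨φ, hφa a rfl, hφ⟩

lemma eq_homEncoding_of_hasMarginals (hE₂ : Symmetric E₂)
    (hx : ∀ u v i j, x u v i j ≠ 0 → o u v ∧ E₂ i j) (ho : ∀ u v, o u v → G.Adj u v)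
    (ho' : ∀ u v, G.Adj u v → (o u v ↔ ¬ o v u)) (hφ : HasMarginals G n E₂ o x φ) :
    x = homEncoding o φ := by
  have hSsum := Ssum_eq_sum_univ (o := o) hE₂ fun u v i j h => (hx u v i j h).2
  funext u v i j
  by_cases huv : o u v
  · have hadj := ho u v huv
    have hrow : ∀ i, ∑ j, x u v i j = if i = φ u then 1 else 0 := fun i => by
      rw [← hφ u v hadj i, hSsum, if_pos huv]
    have hcol : ∀ j, ∑ i, x u v i j = if j = φ v then 1 else 0 := fun j => by
      rw [← hφ v u hadj.symm j, hSsum, if_neg ((ho' u v hadj).1 huv)]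
    rw [eq_ite_of_row_col_sums hrow hcol]
    simp [homEncoding, huv, eq_comm]
  · simp only [homEncoding, huv, false_and, if_false]
    by_contra h
    exact huv (hx u v i j h).1

end Encoding

open Classical in
theorem stmt12_general {V₁ : Type*} (G₁ : SimpleGraph V₁) (hG₁ : G₁.Connected)
    (n : ℕ) (E₂ : Fin n → Fin n → Prop) (hE₂ : Symmetric E₂)
    (o : V₁ → V₁ → Prop) (ho : ∀ u v, o u v → G₁.Adj u v)
    (ho' : ∀ u v, G₁.Adj u v → (o u v ↔ ¬ o v u))
    (a : V₁) (i₀ : Fin n) :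
    Set.BijOn
      (fun (φ : V₁ → Fin n) (u v : V₁) (i j : Fin n) =>
        if o u v ∧ φ u = i ∧ φ v = j then 1 else 0)
      {φ : V₁ → Fin n | (∀ u v, G₁.Adj u v → E₂ (φ u) (φ v)) ∧ φ a = i₀}
      {x : V₁ → V₁ → Fin n → Fin n → ℕ |
        (∀ u v i j, x u v i j ≤ 1) ∧
        (∀ u v i j, x u v i j ≠ 0 → o u v ∧ E₂ i j) ∧
        (∀ u v w, G₁.Adj u v → G₁.Adj u w →
          ∀ i, Ssum n E₂ o x u v i = Ssum n E₂ o x u w i) ∧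
        (∀ v, G₁.Adj a v → Ssum n E₂ o x a v i₀ = 1 ∧
          ∀ j, j ≠ i₀ → Ssum n E₂ o x a v j = 0)} := by
  change Set.BijOn (homEncoding o) _ _
  refine ⟨?_, ?_, ?_⟩
  · rintro φ ⟨hφ, rfl⟩
    have hmarg := hasMarginals_homEncoding hφ ho'
    refine ⟨fun u v i j => ?_, (homEncoding_support_iff hE₂ ho ho').2 hφ,
      fun u v w huv huw i => by rw [hmarg u v huv, hmarg u w huw], fun v hav => ?_⟩
    · unfold homEncoding
      split <;> omega
    · simp +contextual [hmarg a v hav]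
  · rintro φ ⟨hφ, hφa⟩ ψ ⟨hψ, hψa⟩ heq
    funext u
    obtain rfl | hu := eq_or_ne u a
    · rw [hφa, hψa]
    obtain ⟨v, huv⟩ := hG₁.preconnected.exists_adj_of_ne hu
    exact (hasMarginals_homEncoding hφ ho').eq_of_adj
      (heq ▸ hasMarginals_homEncoding hψ ho') huv
  · rintro x ⟨-, hsupp, hcompat, hroot⟩
    have hroot' : ∀ v, G₁.Adj a v → ∀ i, Ssum n E₂ o x a v i = if i = i₀ then 1 else 0 := by
      intro v hav i
      split_ifs with hi
      · exact hi ▸ (hroot v hav).1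
      · exact (hroot v hav).2 i hi
    obtain ⟨φ, hφa, hφ⟩ := exists_hasMarginals hG₁.preconnected hE₂
      (fun u v i j h => (hsupp u v i j h).2) ho' hcompat hroot'
    obtain rfl := eq_homEncoding_of_hasMarginals hE₂ hsupp ho ho' hφ
    exact ⟨φ, ⟨(homEncoding_support_iff hE₂ ho ho').1 hsupp, hφa⟩, rfl⟩

open Classical in
/-- Section 2.2: encoding graph homomorphisms by 0-1 solutions of the linear system
(2.2.3)–(2.2.4).  `G₁` is a connected simple graph with an orientation `o` of its edges,
`G₂` is a connected undirected graph on `{1, …, n}` (possibly with loops), given by a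
symmetric relation `E₂` on `Fin n`.  The 0-1 variables `x^{uv}_{ij}` are indexed by
directed edges `(u,v)` of `G₁` and pairs `(i,j)` with `{i,j} ∈ E₂` (encoded as functions
vanishing outside those indices).  The assignment `x^{uv}_{ij} = 1` iff `φ u = i` and
`φ v = j` is a bijection between homomorphisms `φ : G₁ → G₂` with `φ a = i₀` and 0-1
solutions of the system: for each `u` and `i`, all sums `S^{u,v}_i` over neighbours `v`
of `u` coincide, and for all neighbours `v` of `a`, `S^{a,v}_{i₀} = 1` and `S^{a,v}_j = 0`
for `j ≠ i₀`. -/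
theorem stmt12 {V₁ : Type*} (G₁ : SimpleGraph V₁) (hG₁ : G₁.Connected)
    (n : ℕ) (E₂ : Fin n → Fin n → Prop) (hE₂ : Symmetric E₂)
    (hG₂ : (SimpleGraph.fromRel E₂).Connected)
    (o : V₁ → V₁ → Prop) (ho : ∀ u v, o u v → G₁.Adj u v)
    (ho' : ∀ u v, G₁.Adj u v → (o u v ↔ ¬ o v u))
    (a : V₁) (i₀ : Fin n) :
    Set.BijOn
      (fun (φ : V₁ → Fin n) (u v : V₁) (i j : Fin n) =>
        if o u v ∧ φ u = i ∧ φ v = j then 1 else 0)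
      {φ : V₁ → Fin n | (∀ u v, G₁.Adj u v → E₂ (φ u) (φ v)) ∧ φ a = i₀}
      {x : V₁ → V₁ → Fin n → Fin n → ℕ |
        (∀ u v i j, x u v i j ≤ 1) ∧
        (∀ u v i j, x u v i j ≠ 0 → o u v ∧ E₂ i j) ∧
        (∀ u v w, G₁.Adj u v → G₁.Adj u w →
          ∀ i, Ssum n E₂ o x u v i = Ssum n E₂ o x u w i) ∧
        (∀ v, G₁.Adj a v → Ssum n E₂ o x a v i₀ = 1 ∧
          ∀ j, j ≠ i₀ → Ssum n E₂ o x a v j = 0)} :=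
  stmt12_general G₁ hG₁ n E₂ hE₂ o ho ho' a i₀
end

section
/- Let B_1 ∈ ℳ be an R_1×C_1 matrix and B_2 ∈ ℳ an R_2×C_2 matrix. Consider the conditions: (1) B_1(i,j) = B_2(i,j) for all i ∈ R_1 ∩ R_2 and all j ∈ C_1 ∩ C_2; (2) B_1(i,j) = 0 for all i ∈ R_1 ∖ R_2 and all j ∈ C_1 ∩ C_2; (3) B_2(i,j) = 0 for all i ∈ R_2 ∖ R_1 and all j ∈ C_1 ∩ C_2. If conditions (1)–(3) are all satisfied, then the connected sum B = B_1 # B_2 is defined and ind(B_1, A)·ind(B_2, A) = ind(B_1 # B_2, A) for all A ∈ ℳ. If any of the conditions (1)–(3) is violated, then ind(B_1, A)·ind(B_2, A) = 0 for all A ∈ ℳ. -/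
/-- The class `ℳ` of integer matrices whose rows and columns are indexed by non-empty
finite subsets `R, C ⊂ ℕ`, with no zero rows and no zero columns.  The entries are
encoded by a total function `ℕ → ℕ → ℤ` vanishing outside `R × C`. -/
structure MMat where
  R : Finset ℕ
  C : Finset ℕ
  hR : R.Nonempty
  hC : C.Nonempty
  entry : ℕ → ℕ → ℤ
  supp : ∀ i j, entry i j ≠ 0 → i ∈ R ∧ j ∈ C
  noZeroRow : ∀ i ∈ R, ∃ j ∈ C, entry i j ≠ 0
  noZeroCol : ∀ j ∈ C, ∃ i ∈ R, entry i j ≠ 0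

namespace MMat

open Classical in
/-- The finite set `X_A` of (5.1.2): vectors `(ξ_j : j ∈ C)` with `0 ≤ ξ_j ≤ ν_j` and
`∑_{j ∈ C} A(i,j) ξ_j = 0` for all `i ∈ R`. -/
noncomputable def solSet (A : MMat) (ν : ℕ → ℕ) : Finset ((j : ℕ) → j ∈ A.C → ℕ) :=
  (A.C.pi fun j => Finset.range (ν j + 1)).filter
    (fun ξ => ∀ i ∈ A.R, ∑ j ∈ A.C.attach, A.entry i j.1 * (ξ j.1 j.2 : ℤ) = 0)

/-- The polynomial `w(X_A; ζ) = ∑_{x ∈ X_A} ∏_{j ∈ C} (ζ w_j)^{ξ_j}` of (5.1.3),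
as a polynomial in `ζ`. -/
noncomputable def wPoly (A : MMat) (w : ℕ → ℂ) (ν : ℕ → ℕ) : Polynomial ℂ :=
  ∑ ξ ∈ A.solSet ν, ∏ j ∈ A.C.attach, (Polynomial.C (w j.1) * Polynomial.X) ^ (ξ j.1 j.2)

/-- The power sums `σ_k(A, w, ν) = ζ_1^{-k} + ⋯ + ζ_d^{-k}` of (5.1.1), where
`ζ_1, …, ζ_d` are the roots of `w(X_A; ζ)`, listed with multiplicity. -/
noncomputable def sigma (A : MMat) (w : ℕ → ℂ) (ν : ℕ → ℕ) (k : ℕ) : ℂ :=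
  ((A.wPoly w ν).roots.map fun ζ => ζ⁻¹ ^ k).sum

/-- The direct sum `A₁ ⊕ A₂` of two matrices in `ℳ` with disjoint row index sets and
disjoint column index sets. -/
def dsum (A₁ A₂ : MMat) (hR : Disjoint A₁.R A₂.R) (hC : Disjoint A₁.C A₂.C) : MMat where
  R := A₁.R ∪ A₂.R
  C := A₁.C ∪ A₂.C
  hR := A₁.hR.mono Finset.subset_union_left
  hC := A₁.hC.mono Finset.subset_union_left
  entry := fun i j => A₁.entry i j + A₂.entry i j
  supp := by
    intro i j h
    by_cases h₁ : A₁.entry i j = 0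
    · have h₂ : A₂.entry i j ≠ 0 := by
        intro h₂; exact h (by simp [h₁, h₂])
      obtain ⟨hi, hj⟩ := A₂.supp i j h₂
      exact ⟨Finset.mem_union_right _ hi, Finset.mem_union_right _ hj⟩
    · obtain ⟨hi, hj⟩ := A₁.supp i j h₁
      exact ⟨Finset.mem_union_left _ hi, Finset.mem_union_left _ hj⟩
  noZeroRow := by
    intro i hi
    rcases Finset.mem_union.mp hi with hi₁ | hi₂
    · obtain ⟨j, hj, hne⟩ := A₁.noZeroRow i hi₁
      refine ⟨j, Finset.mem_union_left _ hj, ?_⟩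
      have h₂ : A₂.entry i j = 0 := by
        by_contra h₂
        exact Finset.disjoint_left.mp hR hi₁ (A₂.supp i j h₂).1
      simpa [h₂] using hne
    · obtain ⟨j, hj, hne⟩ := A₂.noZeroRow i hi₂
      refine ⟨j, Finset.mem_union_right _ hj, ?_⟩
      have h₁ : A₁.entry i j = 0 := by
        by_contra h₁
        exact Finset.disjoint_left.mp hR (A₁.supp i j h₁).1 hi₂
      simpa [h₁] using hne
  noZeroCol := by
    intro j hj
    rcases Finset.mem_union.mp hj with hj₁ | hj₂
    · obtain ⟨i, hi, hne⟩ := A₁.noZeroCol j hj₁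
      refine ⟨i, Finset.mem_union_left _ hi, ?_⟩
      have h₂ : A₂.entry i j = 0 := by
        by_contra h₂
        exact Finset.disjoint_left.mp hR hi (A₂.supp i j h₂).1
      simpa [h₂] using hne
    · obtain ⟨i, hi, hne⟩ := A₂.noZeroCol j hj₂
      refine ⟨i, Finset.mem_union_right _ hi, ?_⟩
      have h₁ : A₁.entry i j = 0 := by
        by_contra h₁
        exact Finset.disjoint_left.mp hR (A₁.supp i j h₁).1 hi
      simpa [h₁] using hne

open Classical in
/-- The index `ind(B, A)` of Section 5.1: `ind(B, A) = 1` if `R₁ ⊆ R`, `C₁ ⊆ C`,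
`A` agrees with `B` on `R₁ × C₁` and `A` vanishes on `(R ∖ R₁) × C₁`; otherwise `0`. -/
noncomputable def ind (B A : MMat) : ℂ :=
  if B.R ⊆ A.R ∧ B.C ⊆ A.C ∧ (∀ i ∈ B.R, ∀ j ∈ B.C, A.entry i j = B.entry i j) ∧
      (∀ i ∈ A.R, i ∉ B.R → ∀ j ∈ B.C, A.entry i j = 0)
    then 1 else 0

open Classical in
/-- The connected sum `B₁ # B₂`: the matrix equal to `B₁` on `R₁ × C₁`, to `B₂` on
`R₂ × C₂`, and zero elsewhere (well-defined when the restrictions of `B₁` and `B₂` to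
`(R₁ ∩ R₂) × (C₁ ∩ C₂)` coincide). -/
noncomputable def csum (B₁ B₂ : MMat) : MMat where
  R := B₁.R ∪ B₂.R
  C := B₁.C ∪ B₂.C
  hR := B₁.hR.mono Finset.subset_union_left
  hC := B₁.hC.mono Finset.subset_union_left
  entry := fun i j => if i ∈ B₁.R ∧ j ∈ B₁.C then B₁.entry i j else B₂.entry i j
  supp := by
    intro i j h
    by_cases h₁ : i ∈ B₁.R ∧ j ∈ B₁.C
    · exact ⟨Finset.mem_union_left _ h₁.1, Finset.mem_union_left _ h₁.2⟩
    · have h' : B₂.entry i j ≠ 0 := by simpa [if_neg h₁] using h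
      obtain ⟨hi, hj⟩ := B₂.supp i j h'
      exact ⟨Finset.mem_union_right _ hi, Finset.mem_union_right _ hj⟩
  noZeroRow := by
    intro i hi
    by_cases hi₁ : i ∈ B₁.R
    · obtain ⟨j, hj, hne⟩ := B₁.noZeroRow i hi₁
      exact ⟨j, Finset.mem_union_left _ hj, by simpa [hi₁, hj] using hne⟩
    · have hi₂ : i ∈ B₂.R := by
        rcases Finset.mem_union.mp hi with h | h
        · exact absurd h hi₁
        · exact h
      obtain ⟨j, hj, hne⟩ := B₂.noZeroRow i hi₂
      exact ⟨j, Finset.mem_union_right _ hj, by simpa [hi₁] using hne⟩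
  noZeroCol := by
    intro j hj
    by_cases hj₁ : j ∈ B₁.C
    · obtain ⟨i, hi, hne⟩ := B₁.noZeroCol j hj₁
      exact ⟨i, Finset.mem_union_left _ hi, by simpa [hi, hj₁] using hne⟩
    · have hj₂ : j ∈ B₂.C := by
        rcases Finset.mem_union.mp hj with h | h
        · exact absurd h hj₁
        · exact h
      obtain ⟨i, hi, hne⟩ := B₂.noZeroCol j hj₂
      exact ⟨i, Finset.mem_union_right _ hi, by simpa [hj₁] using hne⟩

/-- A matrix `B ∈ ℳ` is connected if it cannot be written as a direct sum
`B = B₁ ⊕ B₂` of two matrices in `ℳ`. -/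
def Connected (B : MMat) : Prop :=
  ¬ ∃ (B₁ B₂ : MMat) (h₁ : Disjoint B₁.R B₂.R) (h₂ : Disjoint B₁.C B₂.C),
      B = dsum B₁ B₂ h₁ h₂

end MMat

/-! `ind(B, A) = 1` exactly when `A` and `B` agree on all of `ℕ × C_B`: the inclusions
`R_B ⊆ R_A` and `C_B ⊆ C_A` are forced, because `B` has no zero rows and no zero columns.
Conditions (1)–(3) say precisely that `B₁` and `B₂` agree on `ℕ × (C₁ ∩ C₂)`, which is
necessary for both indices to be `1`. Under it, `B₁ # B₂` agrees with `B₁` on the columns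
`C₁` and with `B₂` on the columns `C₂`, so `A` agrees with `B₁ # B₂` on `ℕ × (C₁ ∪ C₂)` iff it
agrees with both `B₁` and `B₂`. -/

namespace MMat

variable {A B B₁ B₂ : MMat}

lemma entry_eq_zero_of_notMem_R {i : ℕ} (hi : i ∉ B.R) (j : ℕ) : B.entry i j = 0 := by
  by_contra h
  exact hi (B.supp i j h).1

lemma entry_eq_zero_of_notMem_C (i : ℕ) {j : ℕ} (hj : j ∉ B.C) : B.entry i j = 0 := by
  by_contra h
  exact hj (B.supp i j h).2

def IsColumnBlock (B A : MMat) : Prop :=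
  B.R ⊆ A.R ∧ B.C ⊆ A.C ∧ (∀ i ∈ B.R, ∀ j ∈ B.C, A.entry i j = B.entry i j) ∧
    (∀ i ∈ A.R, i ∉ B.R → ∀ j ∈ B.C, A.entry i j = 0)

open Classical in
lemma ind_eq_ite (B A : MMat) : ind B A = if IsColumnBlock B A then 1 else 0 := by
  unfold ind IsColumnBlock
  congr

lemma isColumnBlock_iff :
    IsColumnBlock B A ↔ ∀ i, ∀ j ∈ B.C, A.entry i j = B.entry i j := by
  constructor
  · rintro ⟨hR, -, hin, hout⟩ i j hj
    by_cases hiB : i ∈ B.R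
    · exact hin i hiB j hj
    rw [entry_eq_zero_of_notMem_R hiB]
    by_cases hiA : i ∈ A.R
    · exact hout i hiA hiB j hj
    · exact entry_eq_zero_of_notMem_R hiA j
  · intro h
    refine ⟨fun i hi => ?_, fun j hj => ?_, fun i _ j hj => h i j hj,
      fun i _ hiB j hj => (h i j hj).trans (entry_eq_zero_of_notMem_R hiB j)⟩
    · obtain ⟨j, hj, hne⟩ := B.noZeroRow i hi
      exact (A.supp i j (h i j hj ▸ hne)).1
    · obtain ⟨i, -, hne⟩ := B.noZeroCol j hj
      exact (A.supp i j (h i j hj ▸ hne)).2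

/-- Conditions (1)–(3) on a pair `B₁, B₂`. -/
def Compatible (B₁ B₂ : MMat) : Prop :=
  (∀ i ∈ B₁.R ∩ B₂.R, ∀ j ∈ B₁.C ∩ B₂.C, B₁.entry i j = B₂.entry i j) ∧
    (∀ i ∈ B₁.R \ B₂.R, ∀ j ∈ B₁.C ∩ B₂.C, B₁.entry i j = 0) ∧
    (∀ i ∈ B₂.R \ B₁.R, ∀ j ∈ B₁.C ∩ B₂.C, B₂.entry i j = 0)

lemma compatible_iff :
    Compatible B₁ B₂ ↔ ∀ i, ∀ j ∈ B₁.C ∩ B₂.C, B₁.entry i j = B₂.entry i j := by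
  constructor
  · rintro ⟨h₁₂, h₁, h₂⟩ i j hj
    by_cases hi₁ : i ∈ B₁.R <;> by_cases hi₂ : i ∈ B₂.R
    · exact h₁₂ i (Finset.mem_inter.2 ⟨hi₁, hi₂⟩) j hj
    · rw [h₁ i (Finset.mem_sdiff.2 ⟨hi₁, hi₂⟩) j hj, entry_eq_zero_of_notMem_R hi₂]
    · rw [h₂ i (Finset.mem_sdiff.2 ⟨hi₂, hi₁⟩) j hj, entry_eq_zero_of_notMem_R hi₁]
    · rw [entry_eq_zero_of_notMem_R hi₁, entry_eq_zero_of_notMem_R hi₂]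
  · intro h
    refine ⟨fun i _ j hj => h i j hj, fun i hi j hj => ?_, fun i hi j hj => ?_⟩
    · rw [h i j hj, entry_eq_zero_of_notMem_R (Finset.mem_sdiff.1 hi).2]
    · rw [← h i j hj, entry_eq_zero_of_notMem_R (Finset.mem_sdiff.1 hi).2]

lemma compatible_of_isColumnBlock (h₁ : IsColumnBlock B₁ A) (h₂ : IsColumnBlock B₂ A) :
    Compatible B₁ B₂ := by
  rw [isColumnBlock_iff] at h₁ h₂
  rw [compatible_iff]
  intro i j hj
  rw [← h₁ i j (Finset.mem_inter.1 hj).1, h₂ i j (Finset.mem_inter.1 hj).2]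

namespace Compatible

lemma csum_entry_of_mem_left (h : Compatible B₁ B₂) (i : ℕ) {j : ℕ} (hj : j ∈ B₁.C) :
    (csum B₁ B₂).entry i j = B₁.entry i j := by
  change ite _ _ _ = _
  by_cases hi : i ∈ B₁.R
  · rw [if_pos ⟨hi, hj⟩]
  rw [if_neg (fun h => hi h.1), entry_eq_zero_of_notMem_R hi]
  by_cases hj₂ : j ∈ B₂.C
  · rw [← compatible_iff.1 h i j (Finset.mem_inter.2 ⟨hj, hj₂⟩), entry_eq_zero_of_notMem_R hi]
  · exact entry_eq_zero_of_notMem_C i hj₂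

lemma csum_entry_of_mem_right (h : Compatible B₁ B₂) (i : ℕ) {j : ℕ} (hj : j ∈ B₂.C) :
    (csum B₁ B₂).entry i j = B₂.entry i j := by
  change ite _ _ _ = _
  split_ifs with h₁
  · exact compatible_iff.1 h i j (Finset.mem_inter.2 ⟨h₁.2, hj⟩)
  · rfl

lemma isColumnBlock_csum_iff (h : Compatible B₁ B₂) :
    IsColumnBlock (csum B₁ B₂) A ↔ IsColumnBlock B₁ A ∧ IsColumnBlock B₂ A := by
  rw [isColumnBlock_iff, isColumnBlock_iff, isColumnBlock_iff]
  change (∀ i, ∀ j ∈ B₁.C ∪ B₂.C, _) ↔ _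
  simp only [Finset.mem_union, or_imp, forall_and]
  refine and_congr ?_ ?_ <;> refine forall_congr' fun i => forall₂_congr fun j hj => ?_
  · rw [h.csum_entry_of_mem_left i hj]
  · rw [h.csum_entry_of_mem_right i hj]

end Compatible

open Classical in
lemma ind_mul_ind (B₁ B₂ A : MMat) :
    ind B₁ A * ind B₂ A = if IsColumnBlock B₁ A ∧ IsColumnBlock B₂ A then 1 else 0 := by
  rw [ind_eq_ite, ind_eq_ite, ite_zero_mul_ite_zero, one_mul]

end MMat

/-- **Lemma 5.2.** Let `B₁, B₂ ∈ ℳ` be `R₁ × C₁` and `R₂ × C₂` matrices.  If the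
compatibility conditions (1)–(3) hold, then `B₁ # B₂` is defined and
`ind(B₁, A) ⬝ ind(B₂, A) = ind(B₁ # B₂, A)` for all `A ∈ ℳ`; if any of (1)–(3) fails,
then `ind(B₁, A) ⬝ ind(B₂, A) = 0` for all `A ∈ ℳ`. -/
theorem stmt17 (B₁ B₂ : MMat) :
    (((∀ i ∈ B₁.R ∩ B₂.R, ∀ j ∈ B₁.C ∩ B₂.C, B₁.entry i j = B₂.entry i j) ∧
      (∀ i ∈ B₁.R \ B₂.R, ∀ j ∈ B₁.C ∩ B₂.C, B₁.entry i j = 0) ∧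
      (∀ i ∈ B₂.R \ B₁.R, ∀ j ∈ B₁.C ∩ B₂.C, B₂.entry i j = 0)) →
        ∀ A : MMat, MMat.ind B₁ A * MMat.ind B₂ A = MMat.ind (MMat.csum B₁ B₂) A) ∧
    (¬ ((∀ i ∈ B₁.R ∩ B₂.R, ∀ j ∈ B₁.C ∩ B₂.C, B₁.entry i j = B₂.entry i j) ∧
      (∀ i ∈ B₁.R \ B₂.R, ∀ j ∈ B₁.C ∩ B₂.C, B₁.entry i j = 0) ∧
      (∀ i ∈ B₂.R \ B₁.R, ∀ j ∈ B₁.C ∩ B₂.C, B₂.entry i j = 0)) →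
        ∀ A : MMat, MMat.ind B₁ A * MMat.ind B₂ A = 0) := by
  classical
  refine ⟨fun h A => ?_, fun h A => ?_⟩
  · rw [MMat.ind_mul_ind, MMat.ind_eq_ite]
    exact if_congr (MMat.Compatible.isColumnBlock_csum_iff h).symm rfl rfl
  · rw [MMat.ind_mul_ind, if_neg]
    exact fun ⟨h₁, h₂⟩ => h (MMat.compatible_of_isColumnBlock h₁ h₂)
end

section
/- Fix complex weights w_j and positive integers ν_j for all j ∈ ℕ, and let k be a positive integer. Then there exist complex numbers μ_k(B, w, ν), one for each matrix B ∈ ℳ_k, such that for every A ∈ ℳ one has σ_k(A, w, ν) = ∑_{B ∈ ℳ_k} ind(B, A) μ_k(B, w, ν), where for each A ∈ ℳ only finitely many summands are non-zero. -/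
/-!
Write `σ(D)` for the power sum `σ_k` of the matrix `A` restricted to the columns `D ⊆ C`, and
`μ(D) = ∑_{E ⊆ D} Möbius(E, D) σ(E)` for its Möbius transform on the Boolean lattice, so that
`σ(C) = ∑_{D ⊆ C} μ(D)`. The value `μ(D)` only depends on the restriction of `A` to `D`, which is
the unique `B` with `ind(B, A) = 1` and column set `D`; this gives the expansion, and it remains to
see that `μ(D) = 0` once `|D| > k`.

Say a set function has degree `≤ n` if its Möbius transform vanishes on sets of more than `n`
elements; degrees add under products. Grouping the solutions by their support, the coefficient of
`ζ^m` in `w(X_{A|D}; ζ)` has degree `≤ m`, since a solution of total weight `m` has at most `m`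
non-zero entries. Newton's identities write `σ_k` as a combination of such coefficients and of
products of coefficients of degree `i` with `σ_{k-i}`, so by induction `σ_k` has degree `≤ k`.
-/

namespace Polynomial

open Finset

variable {R : Type*} [CommRing R]

theorem coeff_prod_one_sub_C_mul_X {ι : Type*} [Fintype ι] (β : ι → R) (k : ℕ) :
    (∏ i, (1 - C (β i) * X)).coeff k =
      (-1) ^ k * MvPolynomial.aeval β (MvPolynomial.esymm ι R k) := by
  classical
  have hfactor : ∀ i, 1 - C (β i) * X = C (-β i) * X + 1 := fun i => by
    rw [map_neg]; ring
  simp_rw [hfactor, Finset.prod_add, prod_const_one, mul_one, Finset.prod_mul_distrib,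
    ← map_prod, prod_const, finsetSum_coeff, coeff_C_mul_X_pow, MvPolynomial.esymm,
    map_sum, map_prod, MvPolynomial.aeval_X, Finset.mul_sum]
  rw [← Finset.sum_filter, powersetCard_eq_filter]
  refine Finset.sum_congr (by simp [eq_comm]) fun t ht => ?_
  rw [Finset.prod_neg, (mem_filter.1 ht).2]

theorem sum_pow_eq_neg_sub_sum_coeff_mul {ι : Type*} [Fintype ι] (β : ι → R) {k : ℕ}
    (hk : 0 < k) :
    ∑ i, β i ^ k = -(k * (∏ i, (1 - C (β i) * X)).coeff k) -
      ∑ a ∈ antidiagonal k with a.1 ∈ Set.Ioo 0 k,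
        (∏ i, (1 - C (β i) * X)).coeff a.1 * ∑ i, β i ^ a.2 := by
  have := congrArg (MvPolynomial.aeval β) (MvPolynomial.psum_eq_mul_esymm_sub_sum ι R k hk)
  simp only [MvPolynomial.psum, map_sum, map_pow, MvPolynomial.aeval_X, map_sub, map_mul,
    map_neg, map_one, map_natCast] at this
  simp only [coeff_prod_one_sub_C_mul_X, this]
  ring

variable {K : Type*} [Field K]

theorem eq_prod_one_sub_C_inv_mul_X [IsAlgClosed K] {p : K[X]} (hp : p.coeff 0 = 1) :
    p = (p.roots.map fun r => 1 - C r⁻¹ * X).prod := by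
  have hroot_ne : ∀ r ∈ p.roots, r ≠ 0 := by
    rintro r hr rfl
    have h := isRoot_of_mem_roots hr
    rw [IsRoot, ← coeff_zero_eq_eval_zero, hp] at h
    exact one_ne_zero h
  set Q := (p.roots.map fun r => X - C r).prod
  have hsplit : C p.leadingCoeff * Q = p :=
    C_leadingCoeff_mul_prod_multiset_X_sub_C IsAlgClosed.card_roots_eq_natDegree
  have hfactor : ∀ r ∈ p.roots, 1 - C r⁻¹ * X = C (-r⁻¹) * (X - C r) := fun r hr => by
    rw [mul_sub, ← C_mul, neg_mul, inv_mul_cancel₀ (hroot_ne r hr)]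
    simp only [map_neg, map_one]
    ring
  have hlc : p.leadingCoeff = (p.roots.map fun r => -r⁻¹).prod := by
    have h := hp
    rw [← hsplit, mul_coeff_zero, coeff_C_zero, coeff_zero_eq_eval_zero, eval_multiset_prod,
      Multiset.map_map] at h
    rw [eq_inv_of_mul_eq_one_left h, ← Multiset.prod_map_inv]
    simp only [Function.comp_apply, eval_sub, eval_X, eval_C, zero_sub, inv_neg]
  have hC : (p.roots.map fun r => C (-r⁻¹)).prod = C (p.roots.map fun r => -r⁻¹).prod := by
    rw [map_multiset_prod, Multiset.map_map]; rfl
  rw [Multiset.map_congr rfl hfactor, Multiset.prod_map_mul, hC, ← hlc, hsplit]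

noncomputable def invRootsPowerSum (p : K[X]) (k : ℕ) : K :=
  (p.roots.map fun ζ => ζ⁻¹ ^ k).sum

theorem invRootsPowerSum_eq [IsAlgClosed K] {p : K[X]} (hp : p.coeff 0 = 1) {k : ℕ}
    (hk : 0 < k) :
    p.invRootsPowerSum k = -(k * p.coeff k) -
      ∑ a ∈ antidiagonal k with a.1 ∈ Set.Ioo 0 k, p.coeff a.1 * p.invRootsPowerSum a.2 := by
  classical
  have hprod : ∏ r : p.roots, (1 - C (r : K)⁻¹ * X) = p := by
    rw [Finset.prod_eq_multiset_prod, Multiset.map_univ (f := fun r => 1 - C r⁻¹ * X)]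
    exact (eq_prod_one_sub_C_inv_mul_X hp).symm
  have hsum : ∀ j, p.invRootsPowerSum j = ∑ r : p.roots, ((r : K)⁻¹) ^ j := fun j => by
    rw [Finset.sum_eq_multiset_sum, Multiset.map_univ (f := fun r => r⁻¹ ^ j)]; rfl
  have key := sum_pow_eq_neg_sub_sum_coeff_mul (fun r : p.roots => (r : K)⁻¹) hk
  rw [hprod] at key
  simpa only [hsum] using key

end Polynomial

namespace Finset

variable {α R : Type*} [CommRing R]

def moebiusDegreeLE (R α : Type*) [CommRing R] (n : ℕ) : Submodule R (Finset α → R) where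
  carrier := {g | ∃ c : Finset α → R, (∀ U, n < #U → c U = 0) ∧ ∀ D, g D = ∑ U ∈ D.powerset, c U}
  zero_mem' := ⟨0, fun _ _ => rfl, fun _ => by simp⟩
  add_mem' := by
    rintro g h ⟨a, ha, hg⟩ ⟨b, hb, hh⟩
    refine ⟨a + b, fun U hU => by simp [ha U hU, hb U hU], fun D => ?_⟩
    simp [hg, hh, sum_add_distrib]
  smul_mem' := by
    rintro r g ⟨a, ha, hg⟩
    refine ⟨r • a, fun U hU => by simp [ha U hU], fun D => ?_⟩
    simp [hg, mul_sum]

variable [DecidableEq α]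

theorem mul_mem_moebiusDegreeLE {g h : Finset α → R} {s t : ℕ} (hg : g ∈ moebiusDegreeLE R α s)
    (hh : h ∈ moebiusDegreeLE R α t) : g * h ∈ moebiusDegreeLE R α (s + t) := by
  obtain ⟨a, ha, hga⟩ := hg
  obtain ⟨b, hb, hhb⟩ := hh
  refine ⟨fun W => ∑ p ∈ W.powerset ×ˢ W.powerset with p.1 ∪ p.2 = W, a p.1 * b p.2,
    fun W hW => sum_eq_zero fun p hp => ?_, fun D => ?_⟩
  · have hcard : #W ≤ #p.1 + #p.2 := (mem_filter.1 hp).2 ▸ card_union_le _ _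
    rcases lt_or_lt_of_add_lt_add (hW.trans_le hcard) with h1 | h2
    · rw [ha _ h1, zero_mul]
    · rw [hb _ h2, mul_zero]
  · rw [Pi.mul_apply, hga, hhb, sum_mul_sum, ← sum_product (f := fun p => a p.1 * b p.2),
      ← sum_fiberwise_of_maps_to (g := fun p => p.1 ∪ p.2) (t := D.powerset)]
    · refine sum_congr rfl fun W hW => sum_congr ?_ fun _ _ => rfl
      ext ⟨U, V⟩
      simp only [mem_filter, mem_product, mem_powerset] at hW ⊢
      constructor
      · rintro ⟨-, rfl⟩; exact ⟨⟨subset_union_left, subset_union_right⟩, rfl⟩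
      · rintro ⟨-, rfl⟩; exact ⟨union_subset_iff.1 hW, rfl⟩
    · intro p hp
      simp only [mem_product, mem_powerset] at hp ⊢
      exact union_subset hp.1 hp.2

noncomputable def powersetMoebius (g : Finset α → R) (D : Finset α) : R :=
  ∑ E ∈ Iic D, IncidenceAlgebra.mu R E D * g E

theorem powersetMoebius_eq {g c : Finset α → R} (hc : ∀ D, g D = ∑ U ∈ D.powerset, c U)
    (D : Finset α) : powersetMoebius g D = c D :=
  (IncidenceAlgebra.moebius_inversion_bot c g (by simpa only [Iic_eq_powerset]) D).symm

theorem powersetMoebius_empty (g : Finset α → R) : powersetMoebius g ∅ = g ∅ := by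
  rw [powersetMoebius, Iic_eq_powerset, powerset_empty, sum_singleton, IncidenceAlgebra.mu_self,
    one_mul]

theorem powersetMoebius_congr {g g' : Finset α → R} {D : Finset α}
    (h : ∀ E ⊆ D, g E = g' E) : powersetMoebius g D = powersetMoebius g' D :=
  sum_congr rfl fun E hE => by rw [h E (mem_Iic.1 hE)]

theorem powersetMoebius_eq_zero_of_mem_moebiusDegreeLE {g : Finset α → R} {n : ℕ}
    (hg : g ∈ moebiusDegreeLE R α n) {D : Finset α} (hD : n < #D) : powersetMoebius g D = 0 := by
  obtain ⟨c, hc, hgc⟩ := hg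
  rw [powersetMoebius_eq hgc, hc D hD]

theorem sum_powersetMoebius_of_mem_moebiusDegreeLE {g : Finset α → R} {n : ℕ}
    (hg : g ∈ moebiusDegreeLE R α n) (D : Finset α) :
    ∑ E ∈ D.powerset, powersetMoebius g E = g D := by
  obtain ⟨c, -, hgc⟩ := hg
  simp only [powersetMoebius_eq hgc, hgc]

end Finset

open Finset Polynomial in
theorem invRootsPowerSum_mem_moebiusDegreeLE {α K : Type*} [DecidableEq α] [Field K]
    [IsAlgClosed K] {P : Finset α → K[X]} (h0 : ∀ D, (P D).coeff 0 = 1)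
    (hcoeff : ∀ m, (fun D => (P D).coeff m) ∈ moebiusDegreeLE K α m) {k : ℕ} (hk : 0 < k) :
    (fun D => (P D).invRootsPowerSum k) ∈ moebiusDegreeLE K α k := by
  induction k using Nat.strong_induction_on with
  | _ k ih =>
  have hnewton : (fun D => (P D).invRootsPowerSum k) =
      -((k : K) • fun D => (P D).coeff k) -
        ∑ a ∈ antidiagonal k with a.1 ∈ Set.Ioo 0 k,
          (fun D => (P D).coeff a.1) * fun D => (P D).invRootsPowerSum a.2 := by
    funext D
    simp [invRootsPowerSum_eq (h0 D) hk]
  rw [hnewton]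
  refine sub_mem (neg_mem (Submodule.smul_mem _ _ (hcoeff k))) (sum_mem fun a ha => ?_)
  obtain ⟨hsum, hpos, hlt⟩ : a.1 + a.2 = k ∧ 0 < a.1 ∧ a.1 < k := by
    simpa using ha
  rw [← hsum]
  exact mul_mem_moebiusDegreeLE (hcoeff _) (ih _ (by omega) (by omega))

namespace MMat

open Finset Polynomial

-- `A.colPoly w ν D` is `w(X; ζ)` for the submatrix of `A` on the columns `D ⊆ C`. Solutions are
-- encoded as finitely supported functions on `ℕ`, so that those for different `D` share a type.
open Classical in
noncomputable def colSols (A : MMat) (ν : ℕ → ℕ) (D : Finset ℕ) : Finset (ℕ →₀ ℕ) :=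
  (D.finsupp fun j => range (ν j + 1)).filter
    fun g => ∀ i ∈ A.R, (g.sum fun j x => A.entry i j * (x : ℤ)) = 0

noncomputable def colPoly (A : MMat) (w : ℕ → ℂ) (ν : ℕ → ℕ) (D : Finset ℕ) : ℂ[X] :=
  ∑ g ∈ A.colSols ν D, g.prod fun j x => (Polynomial.C (w j) * X) ^ x

variable {A B : MMat} {w : ℕ → ℂ} {ν : ℕ → ℕ} {D : Finset ℕ} {g : ℕ →₀ ℕ}

theorem mem_colSols : g ∈ A.colSols ν D ↔ g.support ⊆ D ∧ (∀ j, g j ≤ ν j) ∧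
    ∀ i ∈ A.R, (g.sum fun j x => A.entry i j * (x : ℤ)) = 0 := by
  classical
  simp only [colSols, mem_filter, mem_finsupp_iff, mem_range, Nat.lt_succ_iff, and_assoc]
  refine and_congr_right fun hsupp => and_congr_left fun _ => ⟨fun h j => ?_, fun h j _ => h j⟩
  by_cases hj : j ∈ D
  · exact h j hj
  · simp [Finsupp.notMem_support_iff.1 fun hj' => hj (hsupp hj')]

theorem coeff_colPoly (m : ℕ) :
    (A.colPoly w ν D).coeff m =
      ∑ g ∈ A.colSols ν D with g.degree = m, g.prod fun j x => w j ^ x := by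
  have hmonomial : ∀ g : ℕ →₀ ℕ, (g.prod fun j x => (Polynomial.C (w j) * X) ^ x) =
      Polynomial.C (g.prod fun j x => w j ^ x) * X ^ g.degree := fun g => by
    simp only [Finsupp.prod, mul_pow, prod_mul_distrib, map_prod, map_pow, prod_pow_eq_pow_sum,
      Finsupp.degree_apply]
  simp only [colPoly, hmonomial, finsetSum_coeff, coeff_C_mul_X_pow, sum_filter, eq_comm]

theorem coeff_zero_colPoly : (A.colPoly w ν D).coeff 0 = 1 := by
  have hzero : (A.colSols ν D).filter (fun g => g.degree = 0) = {0} := by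
    ext g
    simp only [mem_filter, mem_singleton, Finsupp.degree_eq_zero_iff, mem_colSols]
    constructor
    · exact fun h => h.2
    · rintro rfl; simp
  rw [coeff_colPoly, hzero, sum_singleton, Finsupp.prod_zero_index]

theorem colPoly_empty : A.colPoly w ν ∅ = 1 := by
  have hzero : A.colSols ν ∅ = {0} := by
    ext g
    simp only [mem_singleton, mem_colSols, subset_empty, Finsupp.support_eq_empty]
    constructor
    · exact fun h => h.1
    · rintro rfl; simp
  rw [colPoly, hzero, sum_singleton, Finsupp.prod_zero_index]

theorem wPoly_eq_colPoly : A.wPoly w ν = A.colPoly w ν A.C := by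
  classical
  rw [wPoly, colPoly, colSols, Finset.finsupp, filter_map, sum_map, solSet]
  refine sum_congr ?_ fun ξ _ => ?_
  · ext ξ
    simp [Finsupp.sum_indicator_index_eq_sum_attach]
  · simp [Finsupp.prod_indicator_index_eq_prod_attach]

theorem coeff_colPoly_mem_moebiusDegreeLE (m : ℕ) :
    (fun D => (A.colPoly w ν D).coeff m) ∈ moebiusDegreeLE ℂ ℕ m := by
  refine ⟨fun U => ∑ g ∈ A.colSols ν U with g.degree = m ∧ g.support = U,
      g.prod fun j x => w j ^ x, fun U hU => sum_eq_zero fun g hg => ?_, fun D => ?_⟩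
  · obtain ⟨hdeg, rfl⟩ := (mem_filter.1 hg).2
    have hcard : #g.support ≤ g.degree := by
      rw [card_eq_sum_ones, Finsupp.degree_apply]
      exact sum_le_sum fun j hj => Nat.one_le_iff_ne_zero.2 (Finsupp.mem_support_iff.1 hj)
    omega
  · simp only [coeff_colPoly]
    rw [← sum_fiberwise_of_maps_to (g := Finsupp.support) (t := D.powerset)
      fun g hg => mem_powerset.2 (mem_colSols.1 (mem_filter.1 hg).1).1]
    refine sum_congr rfl fun U hU => sum_congr ?_ fun _ _ => rfl
    ext g
    simp only [mem_filter, mem_colSols]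
    constructor
    · rintro ⟨⟨⟨-, hsol⟩, hdeg⟩, rfl⟩; exact ⟨⟨subset_rfl, hsol⟩, hdeg, rfl⟩
    · rintro ⟨⟨-, hsol⟩, hdeg, rfl⟩; exact ⟨⟨⟨mem_powerset.1 hU, hsol⟩, hdeg⟩, rfl⟩

theorem ind_ne_zero_iff : ind B A ≠ 0 ↔ B.R ⊆ A.R ∧ B.C ⊆ A.C ∧
    (∀ i ∈ B.R, ∀ j ∈ B.C, A.entry i j = B.entry i j) ∧
    (∀ i ∈ A.R, i ∉ B.R → ∀ j ∈ B.C, A.entry i j = 0) := by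
  unfold ind
  split_ifs with h
  · exact iff_of_true one_ne_zero h
  · exact iff_of_false (not_not.2 rfl) h

theorem colSols_eq_of_ind_ne_zero (h : ind B A ≠ 0) (hD : D ⊆ B.C) :
    B.colSols ν D = A.colSols ν D := by
  obtain ⟨hR, -, hagree, hzero⟩ := ind_ne_zero_iff.1 h
  ext g
  simp only [mem_colSols]
  refine and_congr_right fun hsupp => and_congr_right fun _ => ?_
  have hrow : ∀ i ∈ B.R, (g.sum fun j x => B.entry i j * (x : ℤ)) =
      g.sum fun j x => A.entry i j * (x : ℤ) := fun i hi =>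
    sum_congr rfl fun j hj => by dsimp only; rw [hagree i hi j (hD (hsupp hj))]
  have hvanish : ∀ i ∈ A.R, i ∉ B.R → (g.sum fun j x => A.entry i j * (x : ℤ)) = 0 :=
    fun i hi hiB => sum_eq_zero fun j hj => by
      dsimp only; rw [hzero i hi hiB j (hD (hsupp hj)), zero_mul]
  constructor
  · intro hB i hi
    by_cases hiB : i ∈ B.R
    · rw [← hrow i hiB]; exact hB i hiB
    · exact hvanish i hi hiB
  · intro hA i hi
    rw [hrow i hi]; exact hA i (hR hi)

theorem colPoly_eq_of_ind_ne_zero (h : ind B A ≠ 0) (hD : D ⊆ B.C) :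
    B.colPoly w ν D = A.colPoly w ν D := by
  rw [colPoly, colPoly, colSols_eq_of_ind_ne_zero h hD]

theorem ext (hR : A.R = B.R) (hC : A.C = B.C) (hentry : A.entry = B.entry) :
    A = B := by
  cases A; cases B
  subst hR hC hentry
  rfl

def res (A : MMat) (D : Finset ℕ) (hD : D.Nonempty) (hDC : D ⊆ A.C) : MMat where
  R := A.R.filter fun i => ∃ j ∈ D, A.entry i j ≠ 0
  C := D
  hR := by
    obtain ⟨j, hj⟩ := hD
    obtain ⟨i, hi, hne⟩ := A.noZeroCol j (hDC hj)
    exact ⟨i, mem_filter.2 ⟨hi, j, hj, hne⟩⟩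
  hC := hD
  entry i j := if j ∈ D then A.entry i j else 0
  supp i j h := by
    split_ifs at h with hj
    · exact ⟨mem_filter.2 ⟨(A.supp i j h).1, j, hj, h⟩, hj⟩
    · exact absurd rfl h
  noZeroRow i hi := by
    obtain ⟨-, j, hj, hne⟩ := mem_filter.1 hi
    exact ⟨j, hj, by rwa [if_pos hj]⟩
  noZeroCol j hj := by
    obtain ⟨i, hi, hne⟩ := A.noZeroCol j (hDC hj)
    exact ⟨i, mem_filter.2 ⟨hi, j, hj, hne⟩, by rwa [if_pos hj]⟩

theorem ind_res (hD : D.Nonempty) (hDC : D ⊆ A.C) : ind (A.res D hD hDC) A = 1 := by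
  refine if_pos ⟨filter_subset _ _, hDC, fun i _ j hj => (if_pos hj).symm, ?_⟩
  intro i hi hiB j hj
  by_contra hne
  exact hiB (mem_filter.2 ⟨hi, j, hj, hne⟩)

theorem eq_res_of_ind_ne_zero (h : ind B A ≠ 0) :
    B = A.res B.C B.hC (ind_ne_zero_iff.1 h).2.1 := by
  obtain ⟨hR, -, hagree, hzero⟩ := ind_ne_zero_iff.1 h
  refine ext ?_ rfl (funext fun i => funext fun j => ?_)
  · ext i
    refine ⟨fun hi => ?_, fun hi => ?_⟩
    · obtain ⟨j, hj, hne⟩ := B.noZeroRow i hi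
      exact mem_filter.2 ⟨hR hi, j, hj, hagree i hi j hj ▸ hne⟩
    · obtain ⟨hiA, j, hj, hne⟩ := mem_filter.1 hi
      by_contra hiB
      exact hne (hzero i hiA hiB j hj)
  · show B.entry i j = if j ∈ B.C then A.entry i j else 0
    split_ifs with hj
    · by_cases hi : i ∈ B.R
      · exact (hagree i hi j hj).symm
      · have hB : B.entry i j = 0 := by_contra fun hne => hi (B.supp i j hne).1
        have hA : A.entry i j = 0 := by_contra fun hne => hne (hzero i (A.supp i j hne).1 hi j hj)
        rw [hA, hB]
    · exact by_contra fun hne => hj (B.supp i j hne).2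

open Classical in
noncomputable def restrictions (A : MMat) : Finset MMat :=
  (A.C.powerset.filter Finset.Nonempty).attach.image fun D =>
    A.res D.val (mem_filter.1 D.property).2 (mem_powerset.1 (mem_filter.1 D.property).1)

theorem mem_restrictions_of_ind_ne_zero (h : ind B A ≠ 0) : B ∈ A.restrictions := by
  classical
  rw [restrictions, mem_image]
  exact ⟨⟨B.C, mem_filter.2 ⟨mem_powerset.2 (ind_ne_zero_iff.1 h).2.1, B.hC⟩⟩, mem_attach _ _,
    (eq_res_of_ind_ne_zero h).symm⟩

theorem finite_setOf_ind_ne_zero (A : MMat) : {B | ind B A ≠ 0}.Finite :=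
  A.restrictions.finite_toSet.subset fun _ => mem_restrictions_of_ind_ne_zero

theorem finsum_ind_mul_eq_sum {F : MMat → ℂ} {G : Finset ℕ → ℂ}
    (hFG : ∀ B, ind B A ≠ 0 → F B = G B.C) :
    ∑ᶠ B, ind B A * F B = ∑ D ∈ A.C.powerset with D.Nonempty, G D := by
  classical
  rw [finsum_eq_sum_of_support_subset _ (s := A.restrictions)
      fun B hB => mem_restrictions_of_ind_ne_zero (left_ne_zero_of_mul hB),
    restrictions, sum_image fun D _ D' _ h => Subtype.ext (congrArg MMat.C h)]
  rw [← sum_attach (A.C.powerset.filter Finset.Nonempty) G]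
  refine sum_congr rfl fun D _ => ?_
  rw [ind_res, one_mul, hFG _ (by rw [ind_res]; exact one_ne_zero)]
  rfl

noncomputable def colPowerSum (A : MMat) (w : ℕ → ℂ) (ν : ℕ → ℕ) (k : ℕ) (D : Finset ℕ) : ℂ :=
  (A.colPoly w ν D).invRootsPowerSum k

theorem sigma_eq_colPowerSum (k : ℕ) : A.sigma w ν k = A.colPowerSum w ν k A.C := by
  rw [sigma, colPowerSum, wPoly_eq_colPoly]
  rfl

theorem colPowerSum_empty (k : ℕ) : A.colPowerSum w ν k ∅ = 0 := by
  simp [colPowerSum, colPoly_empty, invRootsPowerSum]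

theorem colPowerSum_mem_moebiusDegreeLE {k : ℕ} (hk : 0 < k) :
    A.colPowerSum w ν k ∈ moebiusDegreeLE ℂ ℕ k :=
  invRootsPowerSum_mem_moebiusDegreeLE (fun _ => coeff_zero_colPoly)
    coeff_colPoly_mem_moebiusDegreeLE hk

noncomputable def moebiusWeight (w : ℕ → ℂ) (ν : ℕ → ℕ) (k : ℕ) (B : MMat) : ℂ :=
  powersetMoebius (B.colPowerSum w ν k) B.C

theorem moebiusWeight_eq_zero {k : ℕ} (hk : 0 < k) (hB : k < #B.C) :
    moebiusWeight w ν k B = 0 :=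
  powersetMoebius_eq_zero_of_mem_moebiusDegreeLE (colPowerSum_mem_moebiusDegreeLE hk) hB

theorem moebiusWeight_eq_of_ind_ne_zero (k : ℕ) (h : ind B A ≠ 0) :
    moebiusWeight w ν k B = powersetMoebius (A.colPowerSum w ν k) B.C :=
  powersetMoebius_congr fun D hD => by
    rw [colPowerSum, colPowerSum, colPoly_eq_of_ind_ne_zero h hD]

theorem sigma_eq_finsum_ind_mul_moebiusWeight {k : ℕ} (hk : 0 < k) :
    A.sigma w ν k = ∑ᶠ B, ind B A * moebiusWeight w ν k B := by
  have hdeg := A.colPowerSum_mem_moebiusDegreeLE (w := w) (ν := ν) hk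
  rw [finsum_ind_mul_eq_sum fun B => moebiusWeight_eq_of_ind_ne_zero k, sum_filter_of_ne,
    sum_powersetMoebius_of_mem_moebiusDegreeLE hdeg, sigma_eq_colPowerSum]
  rintro D - hD
  refine nonempty_iff_ne_empty.2 fun hempty => hD ?_
  rw [hempty, powersetMoebius_empty, colPowerSum_empty]

end MMat

theorem stmt18_general (w : ℕ → ℂ) (ν : ℕ → ℕ) (k : ℕ) (hk : 0 < k) :
    ∃ μ : MMat → ℂ, ∀ A : MMat,
      {B : MMat | B.C.card ≤ k ∧ MMat.ind B A * μ B ≠ 0}.Finite ∧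
      A.sigma w ν k = ∑ᶠ (B : MMat) (_ : B.C.card ≤ k), MMat.ind B A * μ B := by
  refine ⟨MMat.moebiusWeight w ν k, fun A => ⟨?_, ?_⟩⟩
  · exact A.finite_setOf_ind_ne_zero.subset fun B hB => left_ne_zero_of_mul hB.2
  have hcard : ∀ B : MMat, ∑ᶠ (_ : B.C.card ≤ k), MMat.ind B A * MMat.moebiusWeight w ν k B =
      MMat.ind B A * MMat.moebiusWeight w ν k B := fun B => by
    rw [finsum_eq_if, ite_eq_left_iff]
    intro hB
    rw [MMat.moebiusWeight_eq_zero hk (not_le.1 hB), mul_zero]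
  rw [finsum_congr hcard, MMat.sigma_eq_finsum_ind_mul_moebiusWeight hk]

/-- **Lemma 5.3.** For every `k ≥ 1` there exist complex numbers `μ_k(B, w, ν)`, one for
each matrix `B ∈ ℳ_k` (matrices with at most `k` columns), such that for every `A ∈ ℳ`,
`σ_k(A, w, ν) = ∑_{B ∈ ℳ_k} ind(B, A) μ_k(B, w, ν)`, where for each `A` only finitely
many summands are non-zero. -/
theorem stmt18 (w : ℕ → ℂ) (ν : ℕ → ℕ) (hν : ∀ j, 0 < ν j) (k : ℕ) (hk : 0 < k) :
    ∃ μ : MMat → ℂ, ∀ A : MMat,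
      {B : MMat | B.C.card ≤ k ∧ MMat.ind B A * μ B ≠ 0}.Finite ∧
      A.sigma w ν k = ∑ᶠ (B : MMat) (_ : B.C.card ≤ k), MMat.ind B A * μ B :=
  stmt18_general w ν k hk
end
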